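/- arXiv:0902.4589 — 6 statements merged into one kernel-verified Lean document; each statement's English description precedes it below -/
import Mathlib

section
/- Let K be a proper cone in ℝ^n and let A be a K-irreducible n×n real matrix. Then (I + A)^{m_A − 1} is K-positive, i.e., (I + A)^{m_A − 1} maps every nonzero vector of K into the interior of K. -/
open Matrix Set Real

noncomputable section

/-- A proper cone in `ℝ^n`: a closed convex cone that is pointed and full. -/
def IsProperCone {n : ℕ} (K : Set (Fin n → ℝ)) : Prop :=
  IsClosed K ∧ (∀ x ∈ K, ∀ y ∈ K, x + y ∈ K) ∧
    (∀ (c : ℝ), 0 ≤ c → ∀ x ∈ K, c • x ∈ K) ∧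
    K ∩ (-K) = {0} ∧ (interior K).Nonempty

/-- The positive hull (cone generated by) finitely many vectors. -/
def ConeGen {n m : ℕ} (y : Fin m → Fin n → ℝ) : Set (Fin n → ℝ) :=
  {x | ∃ c : Fin m → ℝ, (∀ j, 0 ≤ c j) ∧ x = ∑ j, c j • y j}

/-- A polyhedral cone: a proper cone that is the positive hull of finitely many vectors. -/
def IsPolyhedralCone {n : ℕ} (K : Set (Fin n → ℝ)) : Prop :=
  IsProperCone K ∧ ∃ (m : ℕ) (y : Fin m → Fin n → ℝ), K = ConeGen y

/-- `A` is `K`-nonnegative: `A K ⊆ K`. -/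
def KNonneg {n : ℕ} (K : Set (Fin n → ℝ)) (A : Matrix (Fin n) (Fin n) ℝ) : Prop :=
  ∀ x ∈ K, A.mulVec x ∈ K

/-- `A` is `K`-positive: `A` maps `K \ {0}` into the interior of `K`. -/
def KPositive {n : ℕ} (K : Set (Fin n → ℝ)) (A : Matrix (Fin n) (Fin n) ℝ) : Prop :=
  ∀ x ∈ K, x ≠ 0 → A.mulVec x ∈ interior K

/-- `A` is `K`-primitive: `A` is `K`-nonnegative and some power of `A` is `K`-positive. -/
def KPrimitive {n : ℕ} (K : Set (Fin n → ℝ)) (A : Matrix (Fin n) (Fin n) ℝ) : Prop :=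
  KNonneg K A ∧ ∃ k : ℕ, 0 < k ∧ KPositive K (A ^ k)

/-- The exponent `γ(A)` of a `K`-primitive matrix: the least `k ≥ 1` with `A^k` `K`-positive. -/
def expnt {n : ℕ} (K : Set (Fin n → ℝ)) (A : Matrix (Fin n) (Fin n) ℝ) : ℕ :=
  sInf {k : ℕ | 0 < k ∧ KPositive K (A ^ k)}

/-- `x` is an extreme vector of `K`. -/
def IsExtremeVec {n : ℕ} (K : Set (Fin n → ℝ)) (x : Fin n → ℝ) : Prop :=
  x ∈ K ∧ x ≠ 0 ∧ ∀ y ∈ K, ∀ z ∈ K, x = y + z →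
    (∃ a : ℝ, 0 ≤ a ∧ y = a • x) ∧ (∃ b : ℝ, 0 ≤ b ∧ z = b • x)

/-- The set of extreme rays of `K`. -/
def ExtremeRays {n : ℕ} (K : Set (Fin n → ℝ)) : Set (Set (Fin n → ℝ)) :=
  {R | ∃ x, IsExtremeVec K x ∧ R = {y | ∃ c : ℝ, 0 ≤ c ∧ y = c • x}}

/-- `K ∈ P(m,n)`: an `n`-dimensional polyhedral cone in `ℝ^n` with exactly `m` extreme rays.
(A proper cone in `ℝ^n` has nonempty interior, hence is automatically `n`-dimensional.) -/
def MemP {n : ℕ} (m : ℕ) (K : Set (Fin n → ℝ)) : Prop :=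
  IsPolyhedralCone K ∧ (ExtremeRays K).ncard = m

/-- A face of a cone `K`. -/
def IsFace {n : ℕ} (K F : Set (Fin n → ℝ)) : Prop :=
  0 ∈ F ∧ F ⊆ K ∧ (∀ x ∈ F, ∀ y ∈ F, x + y ∈ F) ∧
    (∀ (c : ℝ), 0 ≤ c → ∀ x ∈ F, c • x ∈ F) ∧
    ∀ x ∈ F, ∀ y ∈ K, x - y ∈ K → y ∈ F

/-- `A` is `K`-irreducible: `A` is `K`-nonnegative and leaves invariant no nontrivial face. -/
def KIrreducible {n : ℕ} (K : Set (Fin n → ℝ)) (A : Matrix (Fin n) (Fin n) ℝ) : Prop :=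
  KNonneg K A ∧ ∀ F : Set (Fin n → ℝ), IsFace K F → (∀ x ∈ F, A.mulVec x ∈ F) →
    F = ({0} : Set (Fin n → ℝ)) ∨ F = K

/-- If `A` is `K`-irreducible, then `(I + A)^(m_A - 1)` is `K`-positive, where `m_A` is the
degree of the minimal polynomial of `A`. -/
theorem stmt_0 {n : ℕ} (K : Set (Fin n → ℝ)) (A : Matrix (Fin n) (Fin n) ℝ)
    (hK : IsProperCone K) (hA : KIrreducible K A) :
    KPositive K ((1 + A) ^ ((minpoly ℝ A).natDegree - 1)) := by
  obtain ⟨hKcl, hKadd, hKsmul, hKpt, a, haint⟩ := hK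
  obtain ⟨hAnn, hAirr⟩ := hA
  intro x hx hx0
  rcases Nat.eq_zero_or_pos n with hn | hn
  · subst hn; exact absurd (funext fun i => i.elim0) hx0
  haveI : Nonempty (Fin n) := ⟨⟨0, hn⟩⟩
  have h0K : (0 : Fin n → ℝ) ∈ K := by simpa using hKsmul 0 le_rfl x hx
  have hconv : Convex ℝ K := by
    intro u hu v hv s t hs ht hst
    exact hKadd _ (hKsmul s hs u hu) _ (hKsmul t ht v hv)
  have hint : IsIntegral ℝ A := IsIntegral.of_finite ℝ A
  set m := (minpoly ℝ A).natDegree with hm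
  have hm1 : 1 ≤ m := minpoly.natDegree_pos hint
  set B : ℕ → (Fin n → ℝ) := fun N => ((1 + A) ^ N).mulVec x with hB
  -- powers of A applied to x stay in K
  have hAk : ∀ k, (A ^ k).mulVec x ∈ K := by
    intro k; induction k with
    | zero => simpa using hx
    | succ k ih =>
      rw [pow_succ', ← Matrix.mulVec_mulVec]
      exact hAnn _ ih
  have hBsucc : ∀ N, B (N + 1) = B N + A.mulVec (B N) := by
    intro N
    simp only [hB]
    rw [pow_succ', ← Matrix.mulVec_mulVec, Matrix.add_mulVec, Matrix.one_mulVec]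
  have hBK : ∀ N, B N ∈ K := by
    intro N; induction N with
    | zero => simpa [hB] using hx
    | succ N ih =>
      rw [hBsucc]; exact hKadd _ ih _ (hAnn _ ih)
  have hQ : ∀ p, ∀ k, k ≤ p → B p - (A ^ k).mulVec x ∈ K := by
    intro p; induction p with
    | zero =>
      intro k hk
      obtain rfl : k = 0 := Nat.le_zero.mp hk
      simpa [hB] using h0K
    | succ p ih =>
      intro k hk
      rcases Nat.lt_or_ge k (p + 1) with h | h
      · have e : B (p + 1) - (A ^ k).mulVec x
            = (B p - (A ^ k).mulVec x) + A.mulVec (B p) := by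
          rw [hBsucc]; abel
        rw [e]
        exact hKadd _ (ih k (Nat.lt_succ_iff.mp h)) _ (hAnn _ (hBK p))
      · obtain rfl : k = p + 1 := le_antisymm hk h
        have e : B (p + 1) - (A ^ (p + 1)).mulVec x
            = B p + A.mulVec (B p - (A ^ p).mulVec x) := by
          rw [hBsucc, Matrix.mulVec_sub, pow_succ', ← Matrix.mulVec_mulVec]; abel
        rw [e]
        exact hKadd _ (hBK p) _ (hAnn _ (ih p le_rfl))
  by_contra hy
  obtain ⟨f, hf⟩ := geometric_hahn_banach_open_point hconv.interior isOpen_interior hy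
  have hfB1 : f (((1 + A) ^ (m - 1)).mulVec x) = f (B (m - 1)) := rfl
  -- every element of K has f-value at most f (B (m-1))
  have hfle : ∀ z ∈ K, f z ≤ f (B (m - 1)) := by
    intro z hz
    have hcomb : ∀ t : ℝ, t ∈ Set.Ioc (0 : ℝ) 1 →
        f (t • a + (1 - t) • z) < f (B (m - 1)) := by
      intro t ht
      exact hf _ (hconv.combo_interior_closure_mem_interior haint
        (subset_closure hz) ht.1 (by linarith [ht.2]) (by ring))
    have hten : Filter.Tendsto (fun t : ℝ => f (t • a + (1 - t) • z))
        (nhdsWithin 0 (Set.Ioi 0)) (nhds (f z)) := by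
      have hc : Continuous fun t : ℝ => f (t • a + (1 - t) • z) := by
        exact f.continuous.comp ((continuous_id.smul continuous_const).add
          ((continuous_const.sub continuous_id).smul continuous_const))
      have h0 := hc.tendsto 0
      simp only [zero_smul, sub_zero, one_smul, zero_add] at h0
      exact h0.mono_left nhdsWithin_le_nhds
    refine le_of_tendsto hten ?_
    filter_upwards [Ioc_mem_nhdsGT (zero_lt_one (α := ℝ))] with t ht
      using (hcomb t ht).le
  have hfy0 : f (B (m - 1)) = 0 := by
    have h2 : f ((2 : ℝ) • B (m - 1)) ≤ f (B (m - 1)) :=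
      hfle _ (hKsmul 2 (by norm_num) _ (hBK _))
    rw [_root_.map_smul] at h2
    have h0 : f (0 : Fin n → ℝ) ≤ f (B (m - 1)) := hfle _ h0K
    rw [_root_.map_zero] at h0
    simp only [smul_eq_mul] at h2
    linarith
  have hfK : ∀ z ∈ K, f z ≤ 0 := fun z hz => (hfle z hz).trans_eq hfy0
  -- base case: f (A^k x) = 0 for k < m
  have hbase : ∀ k, k < m → f ((A ^ k).mulVec x) = 0 := by
    intro k hk
    have h1 := hfK _ (hAk k)
    have h2 := hfK _ (hQ (m - 1) k (by omega))
    rw [_root_.map_sub, hfy0] at h2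
    linarith
  -- minimal polynomial relation
  have hmonic : (minpoly ℝ A).Monic := minpoly.monic hint
  have hrel : A ^ m = ∑ i ∈ Finset.range m, (-(minpoly ℝ A).coeff i) • A ^ i := by
    have h0 := minpoly.aeval ℝ A
    rw [Polynomial.aeval_eq_sum_range, Finset.sum_range_succ, ← hm,
      hmonic.coeff_natDegree, one_smul] at h0
    have h1 : A ^ m = -∑ i ∈ Finset.range m, (minpoly ℝ A).coeff i • A ^ i :=
      eq_neg_of_add_eq_zero_right h0
    rw [h1, ← Finset.sum_neg_distrib]
    exact Finset.sum_congr rfl fun i _ => (neg_smul _ _).symm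
  -- linear functional on matrices
  let Lx : Matrix (Fin n) (Fin n) ℝ →ₗ[ℝ] (Fin n → ℝ) :=
    { toFun := fun M => M.mulVec x
      map_add' := fun M N => Matrix.add_mulVec M N x
      map_smul' := fun c M => Matrix.smul_mulVec c M x }
  let φ : Matrix (Fin n) (Fin n) ℝ →ₗ[ℝ] ℝ := f.toLinearMap.comp Lx
  have hφ : ∀ k, φ (A ^ k) = 0 := by
    intro k
    induction k using Nat.strong_induction_on with
    | _ k ih =>
      rcases Nat.lt_or_ge k m with h | h
      · exact hbase k h
      · have hAk2 : A ^ k = ∑ i ∈ Finset.range m,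
            (-(minpoly ℝ A).coeff i) • A ^ (k - m + i) := by
          conv_lhs => rw [(Nat.sub_add_cancel h).symm]
          rw [pow_add, hrel, Finset.mul_sum]
          refine Finset.sum_congr rfl fun i _ => ?_
          rw [mul_smul_comm, ← pow_add]
        rw [hAk2, _root_.map_sum]
        refine Finset.sum_eq_zero fun i hi => ?_
        rw [Finset.mem_range] at hi
        rw [_root_.map_smul, ih _ (by omega), smul_zero]
  have hφB : ∀ N k, φ (A ^ k * (1 + A) ^ N) = 0 := by
    intro N
    induction N with
    | zero => intro k; simpa using hφ k
    | succ N ih =>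
      intro k
      have e : A ^ k * (1 + A) ^ (N + 1)
          = A ^ k * (1 + A) ^ N + A ^ (k + 1) * (1 + A) ^ N := by
        rw [pow_succ' (1 + A) N, ← mul_assoc, mul_add, mul_one, add_mul, pow_succ]
      rw [e, _root_.map_add, ih k, ih (k + 1), add_zero]
  have hfB : ∀ N, f (B N) = 0 := by
    intro N
    have h0 := hφB N 0
    rw [pow_zero, one_mul] at h0
    exact h0
  -- the face generated by the orbit of x
  set F : Set (Fin n → ℝ) :=
    {z | z ∈ K ∧ ∃ t : ℝ, 0 ≤ t ∧ ∃ N, t • B N - z ∈ K} with hFdef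
  have hmono : ∀ N M, N ≤ M → B M - B N ∈ K := by
    intro N M h
    induction M, h using Nat.le_induction with
    | base => simpa using h0K
    | succ M hNM ih =>
      have e : B (M + 1) - B N = (B M - B N) + A.mulVec (B M) := by
        rw [hBsucc]; abel
      rw [e]; exact hKadd _ ih _ (hAnn _ (hBK M))
  have hFface : IsFace K F := by
    refine ⟨⟨h0K, 0, le_rfl, 0, by simpa using h0K⟩, fun z hz => hz.1, ?_, ?_, ?_⟩
    · rintro z1 ⟨hz1K, t1, ht1, N1, h1⟩ z2 ⟨hz2K, t2, ht2, N2, h2⟩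
      refine ⟨hKadd _ hz1K _ hz2K, t1 + t2, add_nonneg ht1 ht2, max N1 N2, ?_⟩
      have e : (t1 + t2) • B (max N1 N2) - (z1 + z2)
          = (t1 • B N1 - z1) + (t2 • B N2 - z2)
            + t1 • (B (max N1 N2) - B N1) + t2 • (B (max N1 N2) - B N2) := by
        simp only [smul_sub, add_smul]; abel
      rw [e]
      exact hKadd _ (hKadd _ (hKadd _ h1 _ h2) _
        (hKsmul _ ht1 _ (hmono _ _ (le_max_left _ _)))) _
        (hKsmul _ ht2 _ (hmono _ _ (le_max_right _ _)))
    · rintro c hc z ⟨hzK, t, ht, N, h⟩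
      refine ⟨hKsmul c hc z hzK, c * t, mul_nonneg hc ht, N, ?_⟩
      have e : (c * t) • B N - c • z = c • (t • B N - z) := by
        rw [smul_sub, mul_smul]
      rw [e]; exact hKsmul c hc _ h
    · rintro z ⟨hzK, t, ht, N, h⟩ w hw hzw
      refine ⟨hw, t, ht, N, ?_⟩
      have e : t • B N - w = (t • B N - z) + (z - w) := by abel
      rw [e]; exact hKadd _ h _ hzw
  have hFinv : ∀ z ∈ F, A.mulVec z ∈ F := by
    rintro z ⟨hzK, t, ht, N, h⟩
    refine ⟨hAnn _ hzK, t, ht, N + 1, ?_⟩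
    have e : t • B (N + 1) - A.mulVec z
        = t • B N + A.mulVec (t • B N - z) := by
      rw [hBsucc, Matrix.mulVec_sub, Matrix.mulVec_smul, smul_add]; abel
    rw [e]
    exact hKadd _ (hKsmul t ht _ (hBK N)) _ (hAnn _ h)
  have hxF : x ∈ F := ⟨hx, 1, zero_le_one, 0, by simpa [hB] using h0K⟩
  rcases hAirr F hFface hFinv with h | h
  · rw [h] at hxF; exact hx0 hxF
  · have haK : a ∈ K := interior_subset haint
    have haF : a ∈ F := h ▸ haK
    obtain ⟨-, t, ht, N, hh⟩ := haF
    have h1 := hfK _ hh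
    rw [_root_.map_sub, _root_.map_smul, hfB N] at h1
    have h2 := hf a haint
    rw [hfy0] at h2
    simp only [smul_eq_mul, mul_zero, zero_sub, neg_le, neg_zero] at h1
    linarith
end
end

section
/- Let K be a proper cone in ℝ^n and let A be a K-primitive matrix whose minimal polynomial has degree m_A = 2. Then γ(A) = 1 or γ(A) = 2. -/
open Matrix Set Real

noncomputable section

/-!
Fix `x ∈ K \ {0}`. If `x` is an eigenvector of `A`, then `A^k x ∈ int K` forces `x ∈ int K`
with a positive eigenvalue, so `A² x ∈ int K`. Otherwise `W = span {x, A x}` is a plane which is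
`A`-invariant, because `A²` is a combination of `A` and `1`, and which meets `int K` in `A^k x`.
The planar cone `K ∩ W` is generated by two vectors `u, v` on the boundary of `K`, and
`a u + b v` (`a, b ≥ 0`) is interior exactly when `a, b > 0`. In the basis `u, v`, `A` acts on
`K ∩ W` as a nonnegative `2 × 2` matrix with a positive power, i.e. a primitive matrix, and the
square of a primitive `2 × 2` matrix is already positive. Hence `A² x ∈ int K`, and `γ(A) ≤ 2`.
-/

open Polynomial in
theorem Polynomial.Monic.sq_eq_of_aeval_eq_zero {R S : Type*} [CommRing R] [Ring S]
    [Algebra R S] {p : R[X]} (hp : p.Monic) (hdeg : p.natDegree = 2) {a : S}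
    (ha : aeval a p = 0) : a ^ 2 = -(p.coeff 1 • a) - p.coeff 0 • 1 := by
  rw [hp.as_sum, hdeg] at ha
  simp only [Finset.sum_range_succ, Finset.sum_range_zero, map_add, map_mul, map_pow, aeval_X,
    aeval_C, Algebra.algebraMap_eq_smul_one, pow_zero, pow_one, zero_add, mul_one,
    smul_mul_assoc, one_mul] at ha
  rw [eq_neg_of_add_eq_zero_left ha]
  abel

namespace Submodule

variable {k V : Type*} [DivisionRing k] [AddCommGroup V] [Module k V]

theorem finrank_span_pair {x y : V} (hx : x ≠ 0) (hy : y ∉ span k {x}) :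
    Module.finrank k (span k {x, y}) = 2 := by
  have hli : LinearIndependent k ![x, y] :=
    (LinearIndependent.pair_iff' hx).2 fun a h => hy (mem_span_singleton.2 ⟨a, h⟩)
  rw [← Matrix.range_cons_cons_empty x y ![]]
  simpa using finrank_span_eq_card hli

theorem exists_span_pair_eq [FiniteDimensional k V] {W : Submodule k V}
    (hW : Module.finrank k W = 2) {e : V} (heW : e ∈ W) (he : e ≠ 0) :
    ∃ f, f ∉ span k {e} ∧ span k {e, f} = W := by
  have hlt : span k {e} < W := by
    refine lt_of_le_of_ne ((span_singleton_le_iff_mem e W).2 heW) fun h => ?_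
    have := finrank_span_singleton (K := k) he
    rw [h, hW] at this
    exact absurd this (by norm_num)
  obtain ⟨f, hfW, hf⟩ := SetLike.exists_of_lt hlt
  refine ⟨f, hf, eq_of_le_of_finrank_eq ?_ (by rw [finrank_span_pair he hf, hW])⟩
  rw [span_le, Set.insert_subset_iff, Set.singleton_subset_iff]
  exact ⟨heW, hfW⟩

end Submodule

namespace Matrix

section Intertwining

variable {ι κ R : Type*} [Fintype ι] [Fintype κ] [CommRing R]

theorem mulVec_sum_smul_of_mulVec_eq {A : Matrix ι ι R} {M : Matrix κ κ R} {w : κ → ι → R}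
    (h : ∀ j, A *ᵥ w j = ∑ i, M i j • w i) (c : κ → R) :
    A *ᵥ ∑ j, c j • w j = ∑ i, (M *ᵥ c) i • w i := by
  simp only [mulVec_sum, mulVec_smul, h, Finset.smul_sum, smul_smul, mulVec, dotProduct,
    Finset.sum_smul]
  rw [Finset.sum_comm]
  simp only [mul_comm]

theorem pow_mulVec_sum_smul_of_mulVec_eq [DecidableEq ι] [DecidableEq κ] {A : Matrix ι ι R}
    {M : Matrix κ κ R} {w : κ → ι → R} (h : ∀ j, A *ᵥ w j = ∑ i, M i j • w i) (k : ℕ)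
    (c : κ → R) : (A ^ k) *ᵥ ∑ j, c j • w j = ∑ i, ((M ^ k) *ᵥ c) i • w i := by
  induction k with
  | zero => simp
  | succ k ih =>
    rw [pow_succ', ← mulVec_mulVec, ih, mulVec_sum_smul_of_mulVec_eq h, mulVec_mulVec,
      ← pow_succ']

theorem pow_mulVec_of_mulVec_eq_smul [DecidableEq ι] {A : Matrix ι ι R} {x : ι → R} {μ : R}
    (h : A *ᵥ x = μ • x) (k : ℕ) : (A ^ k) *ᵥ x = μ ^ k • x := by
  induction k with
  | zero => simp
  | succ k ih => rw [pow_succ', ← mulVec_mulVec, ih, mulVec_smul, h, smul_smul, pow_succ]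

end Intertwining

section Positivity

variable {R : Type*} [CommRing R] [LinearOrder R] [IsStrictOrderedRing R]

theorem mulVec_pos {ι : Type*} [Fintype ι] {M : Matrix ι ι R} (hM : ∀ i j, 0 < M i j)
    {c : ι → R} (hc : ∀ j, 0 ≤ c j) (hc0 : c ≠ 0) (i : ι) : 0 < (M *ᵥ c) i := by
  obtain ⟨j, hj⟩ := Function.ne_iff.1 hc0
  exact Finset.sum_pos' (fun l _ => mul_nonneg (hM i l).le (hc l))
    ⟨j, Finset.mem_univ j, mul_pos (hM i j) ((hc j).lt_of_ne' hj)⟩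

theorem pow_apply_zero_zero_mul_pow_apply_zero_one_eq_zero {M : Matrix (Fin 2) (Fin 2) R}
    (h₀ : M 0 0 = 0) (h₁ : M 1 1 = 0) (k : ℕ) : (M ^ k) 0 0 * (M ^ k) 0 1 = 0 := by
  induction k with
  | zero => simp
  | succ k ih =>
    simp only [pow_succ, mul_apply, Fin.sum_univ_two, h₀, h₁]
    linear_combination (M 1 0 * M 0 1) * ih

theorem IsPrimitive.sq_apply_pos {M : Matrix (Fin 2) (Fin 2) R} (hprim : M.IsPrimitive) :
    ∀ i j, 0 < (M ^ 2) i j := by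
  obtain ⟨hM, k, -, hk⟩ := hprim
  -- Otherwise `M` would be triangular or antidiagonal, and so would all its powers.
  have h₀₁ : 0 < M 0 1 := by
    refine (hM 0 1).lt_of_ne' fun h => (hk 0 1).ne' ?_
    have htri : BlockTriangular M Fin.rev := by
      intro i j hij
      fin_cases i <;> fin_cases j <;> simp_all [Fin.rev]
    exact htri.pow k (by decide)
  have h₁₀ : 0 < M 1 0 := by
    refine (hM 1 0).lt_of_ne' fun h => (hk 1 0).ne' ?_
    have htri : BlockTriangular M id := by
      intro i j hij
      fin_cases i <;> fin_cases j <;> simp_all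
    exact htri.pow k (by decide)
  have htr : 0 < M 0 0 + M 1 1 := by
    by_contra! htr
    have h₀ : M 0 0 = 0 := by linarith [hM 0 0, hM 1 1]
    have h₁ : M 1 1 = 0 := by linarith [hM 0 0, hM 1 1]
    exact (mul_pos (hk 0 0) (hk 0 1)).ne'
      (pow_apply_zero_zero_mul_pow_apply_zero_one_eq_zero h₀ h₁ k)
  intro i j
  fin_cases i <;> fin_cases j <;> simp [sq, mul_apply, Fin.sum_univ_two] <;>
    nlinarith [hM 0 0, hM 1 1, mul_pos h₀₁ h₁₀]

end Positivity

end Matrix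

section LineThroughInterior

variable {E : Type*} [AddCommGroup E] [Module ℝ E] [TopologicalSpace E] [ContinuousAdd E]
  [ContinuousSMul ℝ E] {s : Set E}

theorem exists_pos_add_smul_mem_of_mem_interior {x : E} (hx : x ∈ interior s) (d : E) :
    ∃ ε : ℝ, 0 < ε ∧ x + ε • d ∈ s := by
  have hcont : Continuous fun ε : ℝ => x + ε • d := by fun_prop
  have hev : ∀ᶠ ε in nhds (0 : ℝ), x + ε • d ∈ s :=
    hcont.continuousAt.preimage_mem_nhds (by simpa using mem_interior_iff_mem_nhds.1 hx)
  obtain ⟨ε, hεs, hε⟩ :=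
    ((hev.filter_mono nhdsWithin_le_nhds).and (self_mem_nhdsWithin (s := Ioi 0))).exists
  exact ⟨ε, hε, hεs⟩

theorem add_smul_notMem_interior_of_isLeast {e f : E} {t : ℝ}
    (ht : IsLeast {t : ℝ | f + t • e ∈ s} t) : f + t • e ∉ interior s := by
  intro hint
  obtain ⟨ε, hε, hεs⟩ := exists_pos_add_smul_mem_of_mem_interior hint (-e)
  have : t - ε ∈ {t : ℝ | f + t • e ∈ s} := by
    show f + (t - ε) • e ∈ s
    convert hεs using 1
    module
  linarith [ht.2 this]

end LineThroughInterior

theorem self_mem_coneGen {n m : ℕ} (y : Fin m → Fin n → ℝ) (j : Fin m) : y j ∈ ConeGen y :=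
  ⟨Pi.single j 1, fun i => by by_cases h : i = j <;> simp [h], by simp [Pi.single_apply]⟩

namespace IsProperCone

variable {n : ℕ} {K : Set (Fin n → ℝ)}

theorem add_mem (hK : IsProperCone K) {x y : Fin n → ℝ} (hx : x ∈ K) (hy : y ∈ K) :
    x + y ∈ K :=
  hK.2.1 x hx y hy

theorem smul_mem (hK : IsProperCone K) {c : ℝ} (hc : 0 ≤ c) {x : Fin n → ℝ} (hx : x ∈ K) :
    c • x ∈ K :=
  hK.2.2.1 c hc x hx

theorem eq_zero_of_mem_of_neg_mem (hK : IsProperCone K) {x : Fin n → ℝ} (hx : x ∈ K)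
    (hx' : -x ∈ K) : x = 0 := by
  have : x ∈ K ∩ -K := ⟨hx, by simpa [Set.mem_neg] using hx'⟩
  simpa [hK.2.2.2.1] using this

theorem add_mem_interior (hK : IsProperCone K) {x y : Fin n → ℝ} (hx : x ∈ interior K)
    (hy : y ∈ K) : x + y ∈ interior K := by
  have hsub : (· + y) '' interior K ⊆ K := by
    rintro _ ⟨z, hz, rfl⟩
    exact hK.add_mem (interior_subset hz) hy
  exact interior_maximal hsub (isOpenMap_add_right y _ isOpen_interior) ⟨x, hx, rfl⟩

open Pointwise in
theorem smul_mem_interior (hK : IsProperCone K) {c : ℝ} (hc : 0 < c) {x : Fin n → ℝ}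
    (hx : x ∈ interior K) : c • x ∈ interior K := by
  have hsub : c • interior K ⊆ K := by
    rintro _ ⟨z, hz, rfl⟩
    exact hK.smul_mem hc.le (interior_subset hz)
  exact interior_maximal hsub (isOpen_interior.smul₀ hc.ne') ⟨x, hx, rfl⟩

theorem nonneg_of_smul_mem (hK : IsProperCone K) {x : Fin n → ℝ} (hx : x ∈ K) (hx0 : x ≠ 0)
    {t : ℝ} (ht : t • x ∈ K) : 0 ≤ t := by
  by_contra! htneg
  refine hx0 (hK.eq_zero_of_mem_of_neg_mem hx ?_)
  have := hK.smul_mem (inv_nonneg.2 (neg_nonneg.2 htneg.le)) ht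
  rwa [smul_smul, inv_neg, neg_mul, inv_mul_cancel₀ htneg.ne, neg_smul, one_smul] at this

theorem zero_notMem_interior [Nontrivial (Fin n → ℝ)] (hK : IsProperCone K) :
    (0 : Fin n → ℝ) ∉ interior K := by
  intro h0
  obtain ⟨d, hd⟩ := exists_ne (0 : Fin n → ℝ)
  obtain ⟨ε, hε, hεd⟩ := exists_pos_add_smul_mem_of_mem_interior h0 d
  obtain ⟨ε', hε', hεd'⟩ := exists_pos_add_smul_mem_of_mem_interior h0 (-d)
  rw [zero_add] at hεd hεd'
  have hdK : d ∈ K := by simpa [smul_smul, hε.ne'] using hK.smul_mem (inv_pos.2 hε).le hεd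
  have hdK' : -d ∈ K := by
    simpa [smul_smul, hε'.ne'] using hK.smul_mem (inv_pos.2 hε').le hεd'
  exact hd (hK.eq_zero_of_mem_of_neg_mem hdK hdK')

theorem ne_zero_of_mem_interior [Nontrivial (Fin n → ℝ)] (hK : IsProperCone K)
    {x : Fin n → ℝ} (hx : x ∈ interior K) : x ≠ 0 := by
  rintro rfl
  exact hK.zero_notMem_interior hx

theorem pos_and_mem_interior_of_smul_mem_interior [Nontrivial (Fin n → ℝ)]
    (hK : IsProperCone K) {x : Fin n → ℝ} (hx : x ∈ K) {t : ℝ} (ht : t • x ∈ interior K) :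
    0 < t ∧ x ∈ interior K := by
  have htx0 := hK.ne_zero_of_mem_interior ht
  have ht0 : t ≠ 0 := by rintro rfl; simp at htx0
  have htpos : 0 < t :=
    (hK.nonneg_of_smul_mem hx (by rintro rfl; simp at htx0) (interior_subset ht)).lt_of_ne'
      ht0
  refine ⟨htpos, ?_⟩
  simpa [smul_smul, ht0] using hK.smul_mem_interior (inv_pos.2 htpos) ht

theorem exists_add_smul_mem (hK : IsProperCone K) {e : Fin n → ℝ} (he : e ∈ interior K)
    (f : Fin n → ℝ) : ∃ t : ℝ, f + t • e ∈ K := by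
  obtain ⟨ε, hε, hεK⟩ := exists_pos_add_smul_mem_of_mem_interior he f
  refine ⟨ε⁻¹, ?_⟩
  have := hK.smul_mem (inv_pos.2 hε).le hεK
  rwa [smul_add, smul_smul, inv_mul_cancel₀ hε.ne', one_smul, add_comm] at this

theorem exists_isLeast_add_smul_mem [Nontrivial (Fin n → ℝ)] (hK : IsProperCone K)
    {e : Fin n → ℝ} (he : e ∈ interior K) (f : Fin n → ℝ) :
    ∃ t : ℝ, IsLeast {t : ℝ | f + t • e ∈ K} t := by
  set S := {t : ℝ | f + t • e ∈ K}
  have hclosed : IsClosed S := hK.1.preimage (by fun_prop)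
  obtain ⟨t, ht⟩ := hK.exists_add_smul_mem he f
  obtain ⟨s, hs⟩ := hK.exists_add_smul_mem he (-f)
  have hbdd : BddBelow S := by
    refine ⟨-s, fun r hr => ?_⟩
    have hsum : (r + s) • e ∈ K := by
      convert hK.add_mem hr hs using 1
      module
    linarith [hK.nonneg_of_smul_mem (interior_subset he) (hK.ne_zero_of_mem_interior he) hsum]
  exact ⟨sInf S, hclosed.csInf_mem ⟨t, ht⟩ hbdd, fun r hr => csInf_le hbdd hr⟩

theorem mul_le_of_isLeast_add_smul_mem [Nontrivial (Fin n → ℝ)] (hK : IsProperCone K)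
    {e f : Fin n → ℝ} (he : e ∈ interior K) {t : ℝ} (ht : IsLeast {t : ℝ | f + t • e ∈ K} t)
    {a b : ℝ} (hz : a • e + b • f ∈ K) : b * t ≤ a := by
  rcases lt_or_ge 0 b with hb | hb
  · have : a / b ∈ {t : ℝ | f + t • e ∈ K} := by
      have := hK.smul_mem (inv_pos.2 hb).le hz
      simpa [smul_add, smul_smul, inv_mul_cancel₀ hb.ne', div_eq_inv_mul, add_comm] using this
    have := ht.2 this
    rwa [le_div_iff₀ hb, mul_comm] at this
  · have hsum : (a - b * t) • e ∈ K := by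
      have := hK.add_mem hz (hK.smul_mem (neg_nonneg.2 hb) ht.1)
      convert this using 1
      module
    linarith [hK.nonneg_of_smul_mem (interior_subset he) (hK.ne_zero_of_mem_interior he) hsum]

theorem exists_coneGen_eq_inter_span_pair [Nontrivial (Fin n → ℝ)] (hK : IsProperCone K)
    {e f : Fin n → ℝ} (he : e ∈ interior K) (hf : f ∉ Submodule.span ℝ {e}) :
    ∃ w : Fin 2 → Fin n → ℝ, ConeGen w = K ∩ Submodule.span ℝ {e, f} ∧
      (∀ j, w j ∉ interior K) ∧ w 0 + w 1 ∈ interior K := by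
  -- The two boundary rays of the plane cone are where the lines `±f + ℝ e` leave `K`.
  obtain ⟨t₀, ht₀⟩ := hK.exists_isLeast_add_smul_mem he f
  obtain ⟨t₁, ht₁⟩ := hK.exists_isLeast_add_smul_mem he (-f)
  set u := f + t₀ • e
  set v := -f + t₁ • e
  have huv : u + v = (t₀ + t₁) • e := by module
  have hs : 0 < t₀ + t₁ := by
    refine (hK.nonneg_of_smul_mem (interior_subset he) (hK.ne_zero_of_mem_interior he)
      (huv ▸ hK.add_mem ht₀.1 ht₁.1)).lt_of_ne' fun hs => hf ?_
    have hvu : -u = v := add_eq_zero_iff_neg_eq.1 (by rw [huv, hs, zero_smul])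
    have hu0 : f + t₀ • e = 0 := hK.eq_zero_of_mem_of_neg_mem ht₀.1 (hvu ▸ ht₁.1)
    exact Submodule.mem_span_singleton.2 ⟨-t₀, by rw [neg_smul, eq_neg_of_add_eq_zero_left hu0]⟩
  have hspan : ∀ {a b : ℝ}, a • e + b • f ∈ Submodule.span ℝ {e, f} :=
    Submodule.mem_span_pair.2 ⟨_, _, rfl⟩
  refine ⟨![u, v], ?_, ?_, ?_⟩
  · ext z
    constructor
    · rintro ⟨c, hc, rfl⟩
      simp only [Fin.sum_univ_two, cons_val_zero, cons_val_one]
      refine ⟨hK.add_mem (hK.smul_mem (hc 0) ht₀.1) (hK.smul_mem (hc 1) ht₁.1), ?_⟩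
      rw [SetLike.mem_coe]
      convert (hspan (a := c 0 * t₀ + c 1 * t₁) (b := c 0 - c 1)) using 1
      module
    · rintro ⟨hzK, hzW⟩
      obtain ⟨a, b, rfl⟩ := Submodule.mem_span_pair.1 hzW
      have h₀ : b * t₀ ≤ a := hK.mul_le_of_isLeast_add_smul_mem he ht₀ hzK
      have h₁ : -b * t₁ ≤ a :=
        hK.mul_le_of_isLeast_add_smul_mem he ht₁ (by rwa [neg_smul_neg])
      refine ⟨![(a + b * t₁) / (t₀ + t₁), (a - b * t₀) / (t₀ + t₁)], ?_, ?_⟩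
      · simp only [Fin.forall_fin_two, cons_val_zero, cons_val_one]
        constructor <;> apply div_nonneg <;> linarith
      · simp only [Fin.sum_univ_two, cons_val_zero, cons_val_one, u, v]
        match_scalars <;> field_simp <;> ring
  · simpa [Fin.forall_fin_two] using ⟨add_smul_notMem_interior_of_isLeast ht₀,
      add_smul_notMem_interior_of_isLeast ht₁⟩
  · simpa [huv] using hK.smul_mem_interior hs he

theorem sum_smul_mem_interior_iff [Nontrivial (Fin n → ℝ)] (hK : IsProperCone K)
    {w : Fin 2 → Fin n → ℝ} (hw : ∀ j, w j ∈ K) (hwi : ∀ j, w j ∉ interior K)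
    (hsum : w 0 + w 1 ∈ interior K) {c : Fin 2 → ℝ} (hc : ∀ j, 0 ≤ c j) :
    ∑ j, c j • w j ∈ interior K ↔ ∀ j, 0 < c j := by
  rw [Fin.sum_univ_two, Fin.forall_fin_two]
  constructor
  · intro h
    constructor
    · refine (hc 0).lt_of_ne' fun h0 => hwi 1 ?_
      rw [h0, zero_smul, zero_add] at h
      exact (hK.pos_and_mem_interior_of_smul_mem_interior (hw 1) h).2
    · refine (hc 1).lt_of_ne' fun h1 => hwi 0 ?_
      rw [h1, zero_smul, add_zero] at h
      exact (hK.pos_and_mem_interior_of_smul_mem_interior (hw 0) h).2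
  · rintro ⟨h0, h1⟩
    set γ := min (c 0) (c 1)
    have hsplit : c 0 • w 0 + c 1 • w 1 =
        γ • (w 0 + w 1) + ((c 0 - γ) • w 0 + (c 1 - γ) • w 1) := by
      module
    rw [hsplit]
    exact hK.add_mem_interior (hK.smul_mem_interior (lt_min h0 h1) hsum)
      (hK.add_mem (hK.smul_mem (sub_nonneg.2 (min_le_left _ _)) (hw 0))
        (hK.smul_mem (sub_nonneg.2 (min_le_right _ _)) (hw 1)))

theorem sq_mulVec_mem_interior_of_mulVec_eq_smul [Nontrivial (Fin n → ℝ)]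
    (hK : IsProperCone K) {A : Matrix (Fin n) (Fin n) ℝ} {x : Fin n → ℝ} (hx : x ∈ K) {μ : ℝ}
    (hμ : A *ᵥ x = μ • x) {k : ℕ} (hk0 : 0 < k) (hk : (A ^ k) *ᵥ x ∈ interior K) :
    (A ^ 2) *ᵥ x ∈ interior K := by
  rw [pow_mulVec_of_mulVec_eq_smul hμ] at hk ⊢
  obtain ⟨hμk, hxint⟩ := hK.pos_and_mem_interior_of_smul_mem_interior hx hk
  have hμ0 : μ ≠ 0 := by
    rintro rfl
    simp [zero_pow hk0.ne'] at hμk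
  exact hK.smul_mem_interior (by positivity) hxint

theorem sq_mulVec_mem_interior_of_invariant [Nontrivial (Fin n → ℝ)] (hK : IsProperCone K)
    {A : Matrix (Fin n) (Fin n) ℝ} (hA : KNonneg K A) {W : Submodule ℝ (Fin n → ℝ)}
    (hW : Module.finrank ℝ W = 2) (hAW : ∀ z ∈ W, A *ᵥ z ∈ W) {k : ℕ} (hk0 : 0 < k)
    (hk : ∀ z ∈ K ∩ W, z ≠ 0 → (A ^ k) *ᵥ z ∈ interior K) {e : Fin n → ℝ}
    (he : e ∈ interior K) (heW : e ∈ W) :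
    ∀ z ∈ K ∩ W, z ≠ 0 → (A ^ 2) *ᵥ z ∈ interior K := by
  obtain ⟨f, hf, hspan⟩ := Submodule.exists_span_pair_eq hW heW (hK.ne_zero_of_mem_interior he)
  obtain ⟨w, hcone, hwi, hsum⟩ := hK.exists_coneGen_eq_inter_span_pair he hf
  rw [hspan] at hcone
  have hwKW : ∀ j, w j ∈ K ∩ W := fun j => hcone ▸ self_mem_coneGen w j
  have hwK : ∀ j, w j ∈ K := fun j => (hwKW j).1
  have hAw : ∀ j, A *ᵥ w j ∈ ConeGen w := fun j => hcone ▸ ⟨hA _ (hwK j), hAW _ (hwKW j).2⟩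
  choose c hc hAc using hAw
  set M : Matrix (Fin 2) (Fin 2) ℝ := of fun i j => c j i
  have hAM : ∀ j, A *ᵥ w j = ∑ i, M i j • w i := hAc
  have hMnonneg : ∀ i j, 0 ≤ M i j := fun i j => hc j i
  have hcrit := fun {d : Fin 2 → ℝ} (hd : ∀ j, 0 ≤ d j) =>
    hK.sum_smul_mem_interior_iff hwK hwi hsum hd
  have hM : M.IsPrimitive := by
    refine ⟨hMnonneg, k, hk0, fun i j => ?_⟩
    have hw0 : w j ≠ 0 := by
      rintro hw0
      fin_cases j <;> simp_all
    have h := hk (w j) (hwKW j) hw0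
    rw [show w j = ∑ l, (Pi.single j 1 : Fin 2 → ℝ) l • w l by simp,
      pow_mulVec_sum_smul_of_mulVec_eq hAM, hcrit] at h
    · simpa using h i
    · intro l
      simpa using pow_apply_nonneg hMnonneg k l j
  rintro z ⟨hzK, hzW⟩ hz0
  have hz : z ∈ ConeGen w := hcone ▸ ⟨hzK, hzW⟩
  obtain ⟨d, hd, rfl⟩ := hz
  have hpos := mulVec_pos hM.sq_apply_pos hd (by rintro rfl; simp at hz0)
  rw [pow_mulVec_sum_smul_of_mulVec_eq hAM, hcrit fun i => (hpos i).le]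
  exact hpos

theorem kPositive_sq (hK : IsProperCone K) {A : Matrix (Fin n) (Fin n) ℝ} (hA : KPrimitive K A)
    (hdeg : (minpoly ℝ A).natDegree = 2) : KPositive K (A ^ 2) := by
  obtain ⟨hAK, k, hk0, hk⟩ := hA
  intro x hx hx0
  have : Nontrivial (Fin n → ℝ) := ⟨⟨x, 0, hx0⟩⟩
  by_cases heig : ∃ μ : ℝ, A *ᵥ x = μ • x
  · obtain ⟨μ, hμ⟩ := heig
    exact hK.sq_mulVec_mem_interior_of_mulVec_eq_smul hx hμ hk0 (hk x hx hx0)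
  set W := Submodule.span ℝ {x, A *ᵥ x}
  have hxW : x ∈ W := Submodule.subset_span (by simp)
  have hW : Module.finrank ℝ W = 2 := by
    refine Submodule.finrank_span_pair hx0 fun h => heig ?_
    obtain ⟨μ, hμ⟩ := Submodule.mem_span_singleton.1 h
    exact ⟨μ, hμ.symm⟩
  have hA2 := (minpoly.monic (Algebra.IsIntegral.isIntegral (R := ℝ) A)).sq_eq_of_aeval_eq_zero
    hdeg (minpoly.aeval ℝ A)
  have hAW : ∀ z ∈ W, A *ᵥ z ∈ W := by
    intro z hz
    obtain ⟨a, b, rfl⟩ := Submodule.mem_span_pair.1 hz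
    refine Submodule.mem_span_pair.2
      ⟨-(b * (minpoly ℝ A).coeff 0), a - b * (minpoly ℝ A).coeff 1, ?_⟩
    rw [mulVec_add, mulVec_smul, mulVec_smul, mulVec_mulVec, ← sq, hA2, sub_mulVec,
      neg_mulVec, smul_mulVec, smul_mulVec, one_mulVec]
    module
  have hkW : (A ^ k) *ᵥ x ∈ W := by
    simpa [← toLin'_pow] using
      Module.End.pow_apply_mem_of_forall_mem (f' := toLin' A) k (by simpa using hAW) x hxW
  exact hK.sq_mulVec_mem_interior_of_invariant hAK hW hAW hk0 (fun z hz hz0 => hk z hz.1 hz0)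
    (hk x hx hx0) hkW x ⟨hx, hxW⟩ hx0

end IsProperCone

/-- If `A` is `K`-primitive and the degree of its minimal polynomial is `2`,
then `γ(A) = 1` or `γ(A) = 2`. -/
theorem stmt_1 {n : ℕ} (K : Set (Fin n → ℝ)) (A : Matrix (Fin n) (Fin n) ℝ)
    (hK : IsProperCone K) (hA : KPrimitive K A) (hdeg : (minpoly ℝ A).natDegree = 2) :
    expnt K A = 1 ∨ expnt K A = 2 := by
  have h2 : 2 ∈ {k : ℕ | 0 < k ∧ KPositive K (A ^ k)} := ⟨two_pos, hK.kPositive_sq hA hdeg⟩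
  have hpos : 0 < expnt K A := (Nat.sInf_mem ⟨2, h2⟩).1
  have hle : expnt K A ≤ 2 := Nat.sInf_le h2
  omega
end
end

section
/- Let m ≥ 3 be an integer, let c ∈ (0,1), and let h(t) = t^m − c·t − (1−c), viewed as a polynomial over ℂ. If m is even, then all roots of h are simple. If m is odd, then the equation ((m−1)^{m−1}/m^m)·t^m = (t−1)^{m−1} has a unique real root c_m in the interval (0,1), and h has a repeated root if and only if c = c_m. -/
open Polynomial

noncomputable section

/-- The polynomial `h(t) = t^m - c·t - (1-c)` over `ℂ`. -/
def hpolyC (m : ℕ) (c : ℝ) : Polynomial ℂ :=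
  X ^ m - C (c : ℂ) * X - C ((1 : ℂ) - (c : ℂ))

lemma hpolyC_ne_zero (m : ℕ) (hm : 3 ≤ m) (c : ℝ) : hpolyC m c ≠ 0 := by
  intro h
  have h2 := congrArg (fun p => Polynomial.coeff p m) h
  have hm1 : m ≠ 1 := by omega
  have hm0 : m ≠ 0 := by omega
  simp [hpolyC, coeff_X_pow, coeff_X, coeff_C, coeff_one, hm1, hm0, Ne.symm hm1, Ne.symm hm0] at h2

lemma hpolyC_deriv (m : ℕ) (c : ℝ) :
    derivative (hpolyC m c) = C (m : ℂ) * X ^ (m - 1) - C (c : ℂ) := by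
  simp [hpolyC, derivative_X_pow]

lemma key_forward (m : ℕ) (hm : 3 ≤ m) (c : ℝ) (hc0 : 0 < c) (hc1 : c < 1) (z : ℂ)
    (h1 : z ^ m = (c : ℂ) * z + (1 - (c : ℂ))) (h2 : (m : ℂ) * z ^ (m - 1) = (c : ℂ)) :
    (m : ℝ) ^ m * (1 - c) ^ (m - 1) = c ^ m * (1 - (m : ℝ)) ^ (m - 1) := by
  have hc : (c : ℂ) ≠ 0 := by exact_mod_cast hc0.ne'
  have hmC : (m : ℂ) ≠ 0 := by exact_mod_cast (by omega : m ≠ 0)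
  have hm1C : (1 : ℂ) - (m : ℂ) ≠ 0 := by
    have : (m : ℂ) ≠ 1 := by exact_mod_cast (by omega : m ≠ 1)
    intro h; apply this; linear_combination -h
  have hpow : z ^ m = z * z ^ (m - 1) := by
    rw [← pow_succ']; congr 1; omega
  have hcpow : (c : ℂ) ^ m = (c : ℂ) ^ (m - 1) * c := by rw [← pow_succ]; congr 1; omega
  have hmpow : (m : ℂ) ^ m = (m : ℂ) ^ (m - 1) * m := by rw [← pow_succ]; congr 1; omega
  have e1 : (c : ℂ) * z = (m : ℂ) * ((c : ℂ) * z + (1 - (c : ℂ))) := by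
    calc (c : ℂ) * z = z * ((m : ℂ) * z ^ (m-1)) := by rw [h2]; ring
    _ = (m : ℂ) * z ^ m := by rw [hpow]; ring
    _ = _ := by rw [h1]
  have hz : z = ((m : ℂ) * (1 - (c : ℂ))) / ((c : ℂ) * (1 - (m : ℂ))) := by
    rw [eq_div_iff (mul_ne_zero hc hm1C)]
    linear_combination e1
  have hzp : z ^ (m - 1) = (c : ℂ) / (m : ℂ) := by
    rw [eq_div_iff hmC]
    linear_combination h2
  have hA : ((c : ℂ) * (1 - (m : ℂ))) ^ (m - 1) ≠ 0 :=
    pow_ne_zero _ (mul_ne_zero hc hm1C)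
  rw [hz, div_pow, div_eq_div_iff hA hmC, mul_pow, mul_pow] at hzp
  have key : (m : ℂ) ^ m * (1 - (c : ℂ)) ^ (m - 1) = (c : ℂ) ^ m * (1 - (m : ℂ)) ^ (m - 1) := by
    linear_combination hzp + (1 - (c : ℂ)) ^ (m - 1) * hmpow - (1 - (m : ℂ)) ^ (m - 1) * hcpow
  have := key
  apply Complex.ofReal_injective
  push_cast
  linear_combination key

lemma root_iff (m : ℕ) (c : ℝ) (z : ℂ) :
    (hpolyC m c).IsRoot z ↔ z ^ m = (c : ℂ) * z + (1 - (c : ℂ)) := by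
  simp [hpolyC, IsRoot, sub_eq_zero]
  constructor <;> intro h <;> linear_combination h

lemma droot_iff (m : ℕ) (c : ℝ) (z : ℂ) :
    (derivative (hpolyC m c)).IsRoot z ↔ (m : ℂ) * z ^ (m - 1) = (c : ℂ) := by
  rw [hpolyC_deriv]
  simp [IsRoot, sub_eq_zero]

lemma cm_exists_unique (m : ℕ) (hm : 3 ≤ m) (hodd : Odd m) :
    ∃! cm : ℝ, cm ∈ Set.Ioo (0 : ℝ) 1 ∧
      (((m : ℝ) - 1) ^ (m - 1) / (m : ℝ) ^ m) * cm ^ m = (cm - 1) ^ (m - 1) := by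
  have hev : Even (m - 1) := Nat.Odd.sub_odd hodd odd_one
  have hm0 : (0:ℝ) < (m:ℝ) := by positivity
  have hm1 : (0:ℝ) < (m:ℝ) - 1 := by
    have : (1:ℝ) < (m:ℝ) := by exact_mod_cast (by omega : 1 < m)
    linarith
  set K : ℝ := ((m : ℝ) - 1) ^ (m - 1) / (m : ℝ) ^ m with hK
  have hKpos : 0 < K := by positivity
  set f : ℝ → ℝ := fun t => K * t ^ m - (t - 1) ^ (m - 1) with hf
  have hmono : StrictMonoOn f (Set.Icc 0 1) := by
    intro s hs t ht hst
    have h1 : s ^ m < t ^ m := pow_lt_pow_left₀ hst hs.1 (by omega)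
    have h2 : (t - 1) ^ (m - 1) ≤ (s - 1) ^ (m - 1) := by
      have e1 : (s - 1) ^ (m - 1) = (1 - s) ^ (m - 1) := by
        rw [show (1:ℝ) - s = -(s - 1) by ring, hev.neg_pow]
      have e2 : (t - 1) ^ (m - 1) = (1 - t) ^ (m - 1) := by
        rw [show (1:ℝ) - t = -(t - 1) by ring, hev.neg_pow]
      rw [e1, e2]
      exact pow_le_pow_left₀ (by linarith [ht.2]) (by linarith) _
    have := mul_lt_mul_of_pos_left h1 hKpos
    simp only [hf]
    linarith
  have hcont : ContinuousOn f (Set.Icc 0 1) := by fun_prop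
  have hf0 : f 0 = -1 := by
    simp only [hf]
    rw [zero_pow (by omega : m ≠ 0), show (0:ℝ) - 1 = -(1:ℝ) by ring, hev.neg_pow]
    simp
  have hf1 : f 1 = K := by
    simp only [hf]
    rw [show (1:ℝ) - 1 = 0 by ring, zero_pow (by omega : m - 1 ≠ 0)]
    simp
  have hmem : (0:ℝ) ∈ Set.Ioo (f 0) (f 1) := by
    rw [hf0, hf1]; exact ⟨by norm_num, hKpos⟩
  obtain ⟨x, hx, hfx⟩ := intermediate_value_Ioo (by norm_num : (0:ℝ) ≤ 1) hcont hmem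
  refine ⟨x, ⟨hx, by simp only [hf] at hfx; linarith [hfx]⟩, ?_⟩
  rintro y ⟨hy, hyeq⟩
  have hfy : f y = 0 := by simp only [hf]; linarith
  have hfx0 : f x = 0 := hfx
  exact hmono.injOn (Set.mem_Icc_of_Ioo hy) (Set.mem_Icc_of_Ioo hx) (by rw [hfy, hfx0])

lemma key_backward (m : ℕ) (hm : 3 ≤ m) (hodd : Odd m) (c : ℝ) (hc0 : 0 < c) (hc1 : c < 1)
    (heq : (((m : ℝ) - 1) ^ (m - 1) / (m : ℝ) ^ m) * c ^ m = (c - 1) ^ (m - 1)) :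
    ∃ z : ℂ, (hpolyC m c).IsRoot z ∧ (derivative (hpolyC m c)).IsRoot z := by
  have hev : Even (m - 1) := Nat.Odd.sub_odd hodd odd_one
  have hm0 : (0:ℝ) < (m:ℝ) := by positivity
  have hm1 : (0:ℝ) < (m:ℝ) - 1 := by
    have : (1:ℝ) < (m:ℝ) := by exact_mod_cast (by omega : 1 < m)
    linarith
  set zr : ℝ := -((m:ℝ) * (1 - c)) / (((m:ℝ) - 1) * c) with hzr
  have hB : ((m:ℝ) - 1) * c ≠ 0 := by positivity
  have hcpow : c ^ m = c ^ (m - 1) * c := by rw [← pow_succ]; congr 1; omega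
  have hmpow : (m:ℝ) ^ m = (m:ℝ) ^ (m - 1) * m := by rw [← pow_succ]; congr 1; omega
  have hc1pow : (c - 1) ^ (m - 1) = (1 - c) ^ (m - 1) := by
    rw [show (1:ℝ) - c = -(c - 1) by ring, hev.neg_pow]
  -- clear denominator in heq
  have heq' : ((m : ℝ) - 1) ^ (m - 1) * c ^ m = (m:ℝ) ^ m * (1 - c) ^ (m - 1) := by
    rw [div_mul_eq_mul_div, div_eq_iff (by positivity : (m:ℝ)^m ≠ 0)] at heq
    rw [← hc1pow]; linarith
  -- zr ^ (m-1) = c / m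
  have hzpow : zr ^ (m - 1) = c / (m:ℝ) := by
    have e1 : zr ^ (m - 1) = ((m:ℝ) * (1 - c)) ^ (m - 1) / (((m:ℝ) - 1) * c) ^ (m - 1) := by
      rw [hzr, div_pow, hev.neg_pow]
    rw [e1, div_eq_div_iff (by positivity) (by positivity)]
    rw [mul_pow, mul_pow]
    rw [hcpow, hmpow] at heq'
    linear_combination -heq'
  refine ⟨(zr : ℂ), ?_, ?_⟩
  · rw [root_iff]
    have hzm : zr ^ m = zr * (c / (m:ℝ)) := by
      rw [← hzpow, ← pow_succ']; congr 1; omega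
    have : zr ^ m = c * zr + (1 - c) := by
      rw [hzm, hzr]
      field_simp
      ring
    push_cast [← this]
    norm_cast
  · rw [droot_iff]
    have : (m:ℝ) * zr ^ (m - 1) = c := by rw [hzpow]; field_simp
    push_cast [← this]
    norm_cast

/-- Let `m ≥ 3` and `c ∈ (0,1)`, and `h(t) = t^m - c·t - (1-c)` over `ℂ`.  If `m` is even then
all roots of `h` are simple.  If `m` is odd then the equation
`((m-1)^{m-1}/m^m)·t^m = (t-1)^{m-1}` has a unique real root `c_m` in `(0,1)`, and `h` has a
repeated root if and only if `c = c_m`. -/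
theorem stmt_8 (m : ℕ) (hm : 3 ≤ m) (c : ℝ) (hc : c ∈ Set.Ioo (0 : ℝ) 1) :
    (Even m → ∀ z : ℂ, (hpolyC m c).rootMultiplicity z ≤ 1) ∧
    (Odd m →
      (∃! cm : ℝ, cm ∈ Set.Ioo (0 : ℝ) 1 ∧
          (((m : ℝ) - 1) ^ (m - 1) / (m : ℝ) ^ m) * cm ^ m = (cm - 1) ^ (m - 1)) ∧
      (∀ cm : ℝ, cm ∈ Set.Ioo (0 : ℝ) 1 →
          (((m : ℝ) - 1) ^ (m - 1) / (m : ℝ) ^ m) * cm ^ m = (cm - 1) ^ (m - 1) →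
          ((∃ z : ℂ, 2 ≤ (hpolyC m c).rootMultiplicity z) ↔ c = cm))) := by
  obtain ⟨hc0, hc1⟩ := hc
  have hmR : (3:ℝ) ≤ (m:ℝ) := by exact_mod_cast hm
  have hm0 : (0:ℝ) < (m:ℝ) := by linarith
  have h1c : (0:ℝ) < 1 - c := by linarith
  constructor
  · intro heven z
    by_contra h
    push_neg at h
    have h2 : 1 < (hpolyC m c).rootMultiplicity z := by omega
    rw [one_lt_rootMultiplicity_iff_isRoot (hpolyC_ne_zero m hm c)] at h2
    obtain ⟨hr, hdr⟩ := h2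
    rw [root_iff] at hr
    rw [droot_iff] at hdr
    have key := key_forward m hm c hc0 hc1 z hr hdr
    have hodd1 : Odd (m - 1) := Nat.Even.sub_odd (by omega) heven odd_one
    have h3 : ((1:ℝ) - m) ^ (m - 1) < 0 := hodd1.pow_neg (by linarith)
    have h4 : (0:ℝ) < c ^ m := by positivity
    have h5 : (0:ℝ) < (m:ℝ) ^ m * (1 - c) ^ (m - 1) :=
      mul_pos (pow_pos hm0 m) (pow_pos h1c _)
    nlinarith [mul_neg_of_pos_of_neg h4 h3]
  · intro hodd
    have hev : Even (m - 1) := Nat.Odd.sub_odd hodd odd_one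
    refine ⟨cm_exists_unique m hm hodd, ?_⟩
    intro cm hcm hcmeq
    constructor
    · rintro ⟨z, hz2⟩
      have h2 : 1 < (hpolyC m c).rootMultiplicity z := by omega
      rw [one_lt_rootMultiplicity_iff_isRoot (hpolyC_ne_zero m hm c)] at h2
      obtain ⟨hr, hdr⟩ := h2
      rw [root_iff] at hr
      rw [droot_iff] at hdr
      have key := key_forward m hm c hc0 hc1 z hr hdr
      have e1 : ((1:ℝ) - m) ^ (m - 1) = ((m:ℝ) - 1) ^ (m - 1) := by
        rw [show (1:ℝ) - m = -((m:ℝ) - 1) by ring, hev.neg_pow]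
      have e2 : (c - 1) ^ (m - 1) = (1 - c) ^ (m - 1) := by
        rw [show (1:ℝ) - c = -(c - 1) by ring, hev.neg_pow]
      have hceq : (((m : ℝ) - 1) ^ (m - 1) / (m : ℝ) ^ m) * c ^ m = (c - 1) ^ (m - 1) := by
        rw [div_mul_eq_mul_div, div_eq_iff (by positivity : (m:ℝ) ^ m ≠ 0), e2]
        rw [e1] at key
        linarith
      obtain ⟨w, _, huniq⟩ := cm_exists_unique m hm hodd
      have hcw := huniq c ⟨⟨hc0, hc1⟩, hceq⟩
      have hcmw := huniq cm ⟨hcm, hcmeq⟩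
      rw [hcw, hcmw]
    · intro hccm
      obtain ⟨z, hz1, hz2⟩ := key_backward m hm hodd c hc0 hc1 (by rw [hccm]; exact hcmeq)
      exact ⟨z, (one_lt_rootMultiplicity_iff_isRoot (hpolyC_ne_zero m hm c)).2 ⟨hz1, hz2⟩⟩
end
end

section
/- Let m ≥ 3 be an integer, let c ∈ (0,1), and let h(t) = t^m − c·t − (1−c). Then 1 is a root of h, and every real root of h other than 1 lies in the open interval (−1, 0). If m is even, then h has exactly one real root other than 1. If m is odd, then, with c_m denoting the unique real root in (0,1) of ((m−1)^{m−1}/m^m)·t^m = (t−1)^{m−1}: h has exactly two real roots other than 1 when c > c_m; exactly one real root other than 1 (which is a double root) when c = c_m; and no real root other than 1 when c < c_m. -/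
open Polynomial

noncomputable section

/-- The polynomial `h(t) = t^m - c·t - (1-c)` over `ℝ`. -/
def hpolyR (m : ℕ) (c : ℝ) : Polynomial ℝ :=
  X ^ m - C c * X - C (1 - c)

/-!
Write `h(t) = (t ^ m - 1) + c (1 - t)`. Comparing `t ^ m` with `t` and `1` rules out roots other
than `1` outside `(-1, 0)`. The derivative `m t ^ (m - 1) - c` is negative on `(-∞, 0]` for even `m`,
so `h` changes sign exactly once on `(-1, 0)`. For odd `m` it vanishes at `±s` with
`m s ^ (m - 1) = c`: `h` increases up to `-s` and decreases on `[-s, s]`, so it has two, one (double)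
or no roots in `(-1, 0)` according to the sign of its local maximum `h(-s)`. The equation defining
`c_m` says exactly that this maximum vanishes for `c = c_m`, and since `h(t)` is strictly increasing
in `c` for `t < 1`, the maximum is positive for `c > c_m` and negative for `c < c_m`.
-/

open Set

theorem Polynomial.rootMultiplicity_eq_two {R : Type*} [CommRing R]
    {p : R[X]} {t : R} (h0 : p.IsRoot t) (h1 : p.derivative.IsRoot t)
    (h2 : ¬ p.derivative.derivative.IsRoot t) : p.rootMultiplicity t = 2 := by
  have hp : p ≠ 0 := by rintro rfl; simp at h2
  have hlow : 1 < p.rootMultiplicity t := (one_lt_rootMultiplicity_iff_isRoot hp).2 ⟨h0, h1⟩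
  have hup : ¬ 2 < p.rootMultiplicity t := fun h ↦
    h2 (isRoot_iterate_derivative_of_lt_rootMultiplicity (n := 2) h)
  omega

section Basic

variable {m : ℕ} {c t : ℝ}

@[simp]
theorem eval_hpolyR : (hpolyR m c).eval t = t ^ m - c * t - (1 - c) := by
  simp [hpolyR]

@[simp]
theorem eval_derivative_hpolyR : (hpolyR m c).derivative.eval t = m * t ^ (m - 1) - c := by
  simp [hpolyR, derivative_X_pow]

theorem eval_derivative_derivative_hpolyR :
    (hpolyR m c).derivative.derivative.eval t = m * ((m - 1 : ℕ) * t ^ (m - 2)) := by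
  simp [hpolyR, derivative_X_pow, Nat.sub_sub]

theorem isRoot_hpolyR_one : (hpolyR m c).IsRoot 1 := by
  simp [IsRoot]

theorem eval_hpolyR_lt_eval_hpolyR {c' : ℝ} (ht : t < 1) (hc : c < c') :
    (hpolyR m c).eval t < (hpolyR m c').eval t := by
  simp only [eval_hpolyR]
  nlinarith

theorem eval_hpolyR_neg_of_nonneg_of_lt_one (hm : m ≠ 0) (hc : c < 1) (ht0 : 0 ≤ t)
    (ht1 : t < 1) : (hpolyR m c).eval t < 0 := by
  have : t ^ m ≤ t := pow_le_of_le_one ht0 ht1.le hm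
  simp only [eval_hpolyR]
  nlinarith

theorem eval_hpolyR_pos_of_one_lt (hm : m ≠ 0) (hc : c < 1) (ht : 1 < t) :
    0 < (hpolyR m c).eval t := by
  have : t ≤ t ^ m := le_self_pow₀ ht.le hm
  simp only [eval_hpolyR]
  nlinarith

theorem eval_hpolyR_pos_of_even (hme : Even m) (hc : 0 < c) (ht : t ≤ -1) :
    0 < (hpolyR m c).eval t := by
  have : 1 ≤ t ^ m := by
    rw [← hme.neg_pow]
    exact one_le_pow₀ (by linarith)
  simp only [eval_hpolyR]
  nlinarith

theorem eval_hpolyR_neg_of_odd (hmo : Odd m) (hc : c < 1) (ht : t ≤ -1) :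
    (hpolyR m c).eval t < 0 := by
  have : -t ≤ (-t) ^ m := le_self_pow₀ (by linarith) (by rintro rfl; simp at hmo)
  rw [hmo.neg_pow] at this
  simp only [eval_hpolyR]
  nlinarith

theorem mem_Ioo_of_isRoot_hpolyR (hm : m ≠ 0) (hc0 : 0 < c) (hc1 : c < 1)
    (ht : (hpolyR m c).IsRoot t) (ht1 : t ≠ 1) : t ∈ Ioo (-1 : ℝ) 0 := by
  rw [IsRoot.def] at ht
  constructor
  · by_contra! h
    rcases Nat.even_or_odd m with hme | hmo
    · exact (eval_hpolyR_pos_of_even hme hc0 h).ne' ht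
    · exact (eval_hpolyR_neg_of_odd hmo hc1 h).ne ht
  · by_contra! h
    rcases ht1.lt_or_gt with h1 | h1
    · exact (eval_hpolyR_neg_of_nonneg_of_lt_one hm hc1 h h1).ne ht
    · exact (eval_hpolyR_pos_of_one_lt hm hc1 h1).ne' ht

end Basic

section Even

variable {m : ℕ} {c : ℝ}

theorem strictAntiOn_eval_hpolyR_of_even (hm : m ≠ 0) (hme : Even m) (hc : 0 < c) :
    StrictAntiOn (fun t ↦ (hpolyR m c).eval t) (Iic 0) := by
  refine strictAntiOn_of_deriv_neg (convex_Iic 0) (Polynomial.continuousOn _) fun t ht ↦ ?_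
  rw [interior_Iic] at ht
  have : t ^ (m - 1) < 0 := (Nat.Even.sub_odd (by omega) hme odd_one).pow_neg ht
  rw [Polynomial.deriv, eval_derivative_hpolyR]
  nlinarith [(Nat.cast_pos (α := ℝ)).2 (Nat.pos_of_ne_zero hm)]

theorem existsUnique_isRoot_hpolyR_of_even (hm : m ≠ 0) (hme : Even m) (hc0 : 0 < c)
    (hc1 : c < 1) : ∃! t : ℝ, t ≠ 1 ∧ (hpolyR m c).IsRoot t := by
  have hneg : (hpolyR m c).eval 0 < 0 := eval_hpolyR_neg_of_nonneg_of_lt_one hm hc1 le_rfl one_pos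
  have hpos : 0 < (hpolyR m c).eval (-1) := eval_hpolyR_pos_of_even hme hc0 le_rfl
  obtain ⟨a, ha, hroot⟩ := intermediate_value_Ioo' (by norm_num) (Polynomial.continuousOn _)
    ⟨hneg, hpos⟩
  refine ⟨a, ⟨(ha.2.trans one_pos).ne, hroot⟩, fun t ⟨ht1, ht⟩ ↦ ?_⟩
  have htI := mem_Ioo_of_isRoot_hpolyR hm hc0 hc1 ht ht1
  exact (strictAntiOn_eval_hpolyR_of_even hm hme hc0).injOn htI.2.le ha.2.le
    (ht.eq_zero.trans hroot.symm)

end Even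

theorem exists_pos_mul_pow_eq {m : ℕ} {c : ℝ} (hm : 1 < m) (hc : 0 < c) :
    ∃ s : ℝ, 0 < s ∧ m * s ^ (m - 1) = c := by
  refine ⟨(c / m) ^ ((m - 1 : ℕ)⁻¹ : ℝ), by positivity, ?_⟩
  rw [Real.rpow_inv_natCast_pow (by positivity) (by omega)]
  field_simp

section Odd

variable {m : ℕ} {c s : ℝ} (hm : 1 < m) (hmo : Odd m) (hs : 0 < s) (hsc : m * s ^ (m - 1) = c)
include hm hmo hs hsc

theorem strictMonoOn_eval_hpolyR_of_odd :
    StrictMonoOn (fun t ↦ (hpolyR m c).eval t) (Iic (-s)) := by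
  refine strictMonoOn_of_deriv_pos (convex_Iic _) (Polynomial.continuousOn _) fun t ht ↦ ?_
  rw [interior_Iic] at ht
  have : s ^ (m - 1) < t ^ (m - 1) := by
    rw [← (Nat.Odd.sub_odd hmo odd_one).neg_pow t]
    exact pow_lt_pow_left₀ (by linarith [mem_Iio.1 ht]) hs.le (by omega)
  rw [Polynomial.deriv, eval_derivative_hpolyR, ← hsc]
  nlinarith [(Nat.cast_pos (α := ℝ)).2 (by omega : 0 < m)]

omit hs in
theorem strictAntiOn_eval_hpolyR_of_odd :
    StrictAntiOn (fun t ↦ (hpolyR m c).eval t) (Icc (-s) s) := by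
  refine strictAntiOn_of_deriv_neg (convex_Icc _ _) (Polynomial.continuousOn _) fun t ht ↦ ?_
  rw [interior_Icc] at ht
  have : t ^ (m - 1) < s ^ (m - 1) := by
    rw [← (Nat.Odd.sub_odd hmo odd_one).pow_abs t]
    exact pow_lt_pow_left₀ (abs_lt.2 ht) (abs_nonneg t) (by omega)
  rw [Polynomial.deriv, eval_derivative_hpolyR, ← hsc]
  nlinarith [(Nat.cast_pos (α := ℝ)).2 (by omega : 0 < m)]

omit hmo in
theorem lt_one_of_mul_pow_eq (hc : c < 1) : s < 1 := by
  have hm1 : (1 : ℝ) < m := by exact_mod_cast hm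
  have : s ^ (m - 1) < 1 := by nlinarith [pow_pos hs (m - 1)]
  exact (pow_lt_one_iff_of_nonneg hs.le (by omega)).1 this

theorem eval_hpolyR_lt_eval_neg_of_odd {t : ℝ} (hts : t ≤ s) (ht : t ≠ -s) :
    (hpolyR m c).eval t < (hpolyR m c).eval (-s) := by
  rcases ht.lt_or_gt with h | h
  · exact strictMonoOn_eval_hpolyR_of_odd hm hmo hs hsc h.le (mem_Iic.2 le_rfl) h
  · exact strictAntiOn_eval_hpolyR_of_odd hm hmo hsc ⟨le_rfl, by linarith⟩ ⟨h.le, hts⟩ h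

theorem eval_hpolyR_le_eval_neg_of_odd {t : ℝ} (hts : t ≤ s) :
    (hpolyR m c).eval t ≤ (hpolyR m c).eval (-s) := by
  rcases eq_or_ne t (-s) with rfl | ht
  · exact le_rfl
  · exact (eval_hpolyR_lt_eval_neg_of_odd hm hmo hs hsc hts ht).le

omit hm hs in
theorem isRoot_derivative_hpolyR_neg_of_odd : (hpolyR m c).derivative.IsRoot (-s) := by
  rw [IsRoot.def, eval_derivative_hpolyR, (Nat.Odd.sub_odd hmo odd_one).neg_pow, hsc, sub_self]

theorem rootMultiplicity_hpolyR_neg_of_odd (h : (hpolyR m c).IsRoot (-s)) :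
    (hpolyR m c).rootMultiplicity (-s) = 2 := by
  refine rootMultiplicity_eq_two h (isRoot_derivative_hpolyR_neg_of_odd hmo hsc) ?_
  rw [IsRoot.def, eval_derivative_derivative_hpolyR]
  have : ((m - 1 : ℕ) : ℝ) ≠ 0 := by exact_mod_cast (by omega : m - 1 ≠ 0)
  have : (m : ℝ) ≠ 0 := by exact_mod_cast (by omega : m ≠ 0)
  have : (-s) ^ (m - 2) ≠ 0 := pow_ne_zero _ (neg_ne_zero.2 hs.ne')
  positivity

theorem eq_neg_of_isRoot_hpolyR_of_odd (hc : c < 1) (h : (hpolyR m c).eval (-s) = 0) {t : ℝ}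
    (ht : (hpolyR m c).IsRoot t) (ht1 : t ≠ 1) : t = -s := by
  have hc0 : 0 < c := hsc ▸ by positivity
  have htI := mem_Ioo_of_isRoot_hpolyR (by omega) hc0 hc ht ht1
  by_contra hne
  have := eval_hpolyR_lt_eval_neg_of_odd hm hmo hs hsc (by linarith [htI.2]) hne
  rw [ht.eq_zero, h] at this
  exact lt_irrefl 0 this

theorem ncard_isRoot_hpolyR_of_odd (hc : c < 1) (h : 0 < (hpolyR m c).eval (-s)) :
    {t : ℝ | t ≠ 1 ∧ (hpolyR m c).IsRoot t}.ncard = 2 := by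
  have hc0 : 0 < c := hsc ▸ by positivity
  have hs1 := lt_one_of_mul_pow_eq hm hs hsc hc
  obtain ⟨a, ha, ha0⟩ := intermediate_value_Ioo (by linarith) (Polynomial.continuousOn _)
    ⟨eval_hpolyR_neg_of_odd hmo hc le_rfl, h⟩
  obtain ⟨b, hb, hb0⟩ := intermediate_value_Ioo' (by linarith) (Polynomial.continuousOn _)
    ⟨eval_hpolyR_neg_of_nonneg_of_lt_one (by omega) hc le_rfl one_pos, h⟩
  suffices {t : ℝ | t ≠ 1 ∧ (hpolyR m c).IsRoot t} = {a, b} from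
    this ▸ ncard_pair (ha.2.trans hb.1).ne
  ext t
  refine ⟨fun ⟨ht1, ht⟩ ↦ ?_, ?_⟩
  · have htI := mem_Ioo_of_isRoot_hpolyR (by omega) hc0 hc ht ht1
    rcases le_or_gt t (-s) with hts | hts
    · exact .inl <| (strictMonoOn_eval_hpolyR_of_odd hm hmo hs hsc).injOn hts ha.2.le
        (ht.eq_zero.trans ha0.symm)
    · exact .inr <| (strictAntiOn_eval_hpolyR_of_odd hm hmo hsc).injOn
        ⟨hts.le, by linarith [htI.2]⟩ ⟨hb.1.le, by linarith [hb.2]⟩ (ht.eq_zero.trans hb0.symm)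
  · rintro (rfl | rfl)
    · exact ⟨by linarith [ha.2], ha0⟩
    · exact ⟨by linarith [hb.2], hb0⟩

theorem eval_hpolyR_neg_eq_zero_of_odd (hc : c < 1)
    (hE : ((m - 1 : ℝ) ^ (m - 1) / (m : ℝ) ^ m) * c ^ m = (c - 1) ^ (m - 1)) :
    (hpolyR m c).eval (-s) = 0 := by
  have hm1 : (1 : ℝ) < m := by exact_mod_cast hm
  have hval : (hpolyR m c).eval (-s) = (m - 1) * s ^ m - (1 - c) := by
    have hsm : s ^ m = s ^ (m - 1) * s := by rw [← pow_succ, Nat.sub_add_cancel hm.le]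
    rw [eval_hpolyR, hmo.neg_pow, hsm, ← hsc]
    ring
  -- this is `hE` with `c = m * s ^ (m - 1)` substituted on its left-hand side
  have hpow : ((m - 1) * s ^ m) ^ (m - 1) = (1 - c) ^ (m - 1) := by
    rw [← (Nat.Odd.sub_odd hmo odd_one).neg_pow (1 - c), neg_sub, ← hE, ← hsc, mul_pow, mul_pow,
      ← pow_mul, ← pow_mul, mul_comm m (m - 1)]
    field_simp
  rw [hval, (pow_left_inj₀ (by positivity) (by linarith) (by omega)).1 hpow, sub_self]

end Odd

/-- Let `m ≥ 3`, `c ∈ (0,1)`, `h(t) = t^m - c·t - (1-c)`.  Then `1` is a root of `h` and every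
real root of `h` other than `1` lies in `(-1,0)`.  If `m` is even, `h` has exactly one real root
other than `1`.  If `m` is odd then, with `c_m` the unique root in `(0,1)` of
`((m-1)^{m-1}/m^m)·t^m = (t-1)^{m-1}`: for `c > c_m` there are exactly two real roots other
than `1`; for `c = c_m` exactly one (a double root); for `c < c_m` none. -/
theorem stmt_9 (m : ℕ) (hm : 3 ≤ m) (c : ℝ) (hc : c ∈ Set.Ioo (0 : ℝ) 1) :
    (hpolyR m c).IsRoot 1 ∧
    (∀ t : ℝ, (hpolyR m c).IsRoot t → t ≠ 1 → t ∈ Set.Ioo (-1 : ℝ) 0) ∧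
    (Even m → ∃! t : ℝ, t ≠ 1 ∧ (hpolyR m c).IsRoot t) ∧
    (Odd m → ∀ cm : ℝ, cm ∈ Set.Ioo (0 : ℝ) 1 →
      (((m : ℝ) - 1) ^ (m - 1) / (m : ℝ) ^ m) * cm ^ m = (cm - 1) ^ (m - 1) →
      ((cm < c → {t : ℝ | t ≠ 1 ∧ (hpolyR m c).IsRoot t}.ncard = 2) ∧
       (c = cm → (∃! t : ℝ, t ≠ 1 ∧ (hpolyR m c).IsRoot t) ∧
          (∀ t : ℝ, t ≠ 1 → (hpolyR m c).IsRoot t → (hpolyR m c).rootMultiplicity t = 2)) ∧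
       (c < cm → ∀ t : ℝ, (hpolyR m c).IsRoot t → t = 1))) := by
  obtain ⟨hc0, hc1⟩ := hc
  refine ⟨isRoot_hpolyR_one, fun t ht ht1 ↦ mem_Ioo_of_isRoot_hpolyR (by omega) hc0 hc1 ht ht1,
    fun hme ↦ existsUnique_isRoot_hpolyR_of_even (by omega) hme hc0 hc1, ?_⟩
  rintro hmo cm ⟨hcm0, hcm1⟩ hE
  obtain ⟨s, hs, hsc⟩ := exists_pos_mul_pow_eq (by omega : 1 < m) hcm0
  have hcrit := eval_hpolyR_neg_eq_zero_of_odd (by omega) hmo hs hsc hcm1 hE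
  refine ⟨fun hlt ↦ ?_, ?_, fun hlt t ht ↦ ?_⟩
  · obtain ⟨s', hs', hsc'⟩ := exists_pos_mul_pow_eq (by omega : 1 < m) hc0
    refine ncard_isRoot_hpolyR_of_odd (by omega) hmo hs' hsc' hc1 ?_
    calc 0 = (hpolyR m cm).eval (-s) := hcrit.symm
      _ < (hpolyR m c).eval (-s) := eval_hpolyR_lt_eval_hpolyR (by linarith) hlt
      _ ≤ (hpolyR m c).eval (-s') :=
        eval_hpolyR_le_eval_neg_of_odd (by omega) hmo hs' hsc' (by linarith)
  · rintro rfl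
    have huniq {t : ℝ} (ht : (hpolyR m c).IsRoot t) (ht1 : t ≠ 1) : t = -s :=
      eq_neg_of_isRoot_hpolyR_of_odd (by omega) hmo hs hsc hc1 hcrit ht ht1
    exact ⟨⟨-s, ⟨by linarith, hcrit⟩, fun t ⟨ht1, ht⟩ ↦ huniq ht ht1⟩,
      fun t ht1 ht ↦ huniq ht ht1 ▸ rootMultiplicity_hpolyR_neg_of_odd (by omega) hmo hs hsc hcrit⟩
  · by_contra ht1
    have htI := mem_Ioo_of_isRoot_hpolyR (by omega) hc0 hc1 ht ht1
    have hlt' := eval_hpolyR_lt_eval_hpolyR (m := m) (t := t) (by linarith [htI.2]) hlt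
    have hle := eval_hpolyR_le_eval_neg_of_odd (by omega) hmo hs hsc (by linarith [htI.2] : t ≤ s)
    linarith [ht.eq_zero]
end
end

section
/- Let m ≥ 3 be an integer and let c ∈ (0,1), with the additional assumption c < 3/4 in case m = 3. Then the polynomial h(t) = t^m − c·t − (1−c) has exactly one complex root of the form r·e^{iθ} with r > 0 and θ ∈ (2π/m, 2π/(m−1)). Moreover, for this root, the polynomial g_θ(t) = (sin((m−1)θ)/sin θ)·t^m − (sin(mθ)/sin θ)·t^{m−1} + 1 has a unique positive real root, this root is less than 1, and it equals r. -/
/-!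
Write `m = n + 1` and `z = r e^{iθ}` with `θ ∈ (2π/(n+1), 2π/n)`, where
`sin θ, sin ((n+1)θ) > 0 > sin (nθ)`. The imaginary part of `h(z) = 0` and a combination of
both parts give the polar equations `r^n sin ((n+1)θ) = c sin θ` and
`r^(n+1) sin (nθ) = (c-1) sin θ`. Eliminating `r` leaves the phase equation
`sin ((n+1)θ)^(n+1) (1-c)^n = c^(n+1) (-sin nθ)^n sin θ`, and conversely every solution `θ`
of it yields a unique `r`. Its logarithmic form is strictly increasing in `θ`, because the
derivative is a sum of two squares over a positive denominator; this gives uniqueness. The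
intermediate value theorem gives existence: for `n ≥ 3` directly on the closed interval, for
`n = 2` after dividing by `sin³ θ`, and the sign at `θ = π` is then positive exactly when
`c < 3/4`. Dividing the polar equations by `sin θ` turns them into `g_θ(r) = 0`; finally
`g_θ` is strictly decreasing on `[0, ∞)` and `g_θ(1) < 0`.
-/

open Polynomial Real

noncomputable section

/-- The polynomial `g_θ(t) = (sin((m-1)θ)/sin θ)·t^m - (sin(mθ)/sin θ)·t^{m-1} + 1`. -/
def gpoly (m : ℕ) (θ t : ℝ) : ℝ :=
  (Real.sin (((m : ℝ) - 1) * θ) / Real.sin θ) * t ^ m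
    - (Real.sin ((m : ℝ) * θ) / Real.sin θ) * t ^ (m - 1) + 1

open Set

def sector (n : ℕ) : Set ℝ := Ioo (2 * π / (n + 1)) (2 * π / n)

section Sector

variable {n : ℕ} {θ : ℝ}

lemma bounds_of_mem_sector (hn : 2 ≤ n) (hθ : θ ∈ sector n) :
    0 < θ ∧ θ < π ∧ n * θ < 2 * π ∧ 2 * π < (n + 1) * θ := by
  obtain ⟨h₁, h₂⟩ := hθ
  have hn' : (2 : ℝ) ≤ n := by exact_mod_cast hn
  rw [div_lt_iff₀ (by positivity)] at h₁
  rw [lt_div_iff₀ (by positivity)] at h₂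
  have h₀ : 0 < θ := by nlinarith [pi_pos]
  exact ⟨h₀, by nlinarith, by linarith, by linarith⟩

lemma sin_pos_of_mem_sector (hn : 2 ≤ n) (hθ : θ ∈ sector n) :
    0 < sin θ := by
  obtain ⟨h₀, hπ, -, -⟩ := bounds_of_mem_sector hn hθ
  exact sin_pos_of_pos_of_lt_pi h₀ hπ

lemma sin_succ_mul_pos_of_mem_sector (hn : 2 ≤ n) (hθ : θ ∈ sector n) :
    0 < sin ((n + 1) * θ) := by
  obtain ⟨-, hπ, h₂, h₁⟩ := bounds_of_mem_sector hn hθ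
  rw [← sin_sub_two_pi]
  exact sin_pos_of_pos_of_lt_pi (by linarith) (by linarith)

lemma sin_mul_neg_of_mem_sector (hn : 2 ≤ n) (hθ : θ ∈ sector n) :
    sin (n * θ) < 0 := by
  obtain ⟨-, hπ, h₂, h₁⟩ := bounds_of_mem_sector hn hθ
  have := sin_pos_of_pos_of_lt_pi (x := n * θ - π) (by linarith) (by linarith)
  rw [sin_sub_pi] at this
  linarith

lemma sin_add_sin_mul_lt_sin_succ_mul (hn : 2 ≤ n)
    (hθ : θ ∈ sector n) :
    sin θ + sin (n * θ) < sin ((n + 1) * θ) := by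
  obtain ⟨h₀, hπ, h₂, h₁⟩ := bounds_of_mem_sector hn hθ
  set φ := (2 * n + 1) * θ / 2 - 2 * π with hφ
  have hdiff : sin ((n + 1) * θ) - sin (n * θ) = 2 * sin (θ / 2) * cos φ := by
    rw [sin_sub_sin, cos_sub_two_pi]
    ring_nf
  have hsin : sin θ = 2 * sin (θ / 2) * cos (θ / 2) := by
    rw [← sin_two_mul]
    ring_nf
  -- `(2n+1)θ/2` lies within `θ/2` of `2π`
  have hcos : cos (θ / 2) < cos φ := by
    rw [← cos_abs φ]
    exact cos_lt_cos_of_nonneg_of_le_pi (abs_nonneg φ) (by linarith)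
      (abs_lt.2 ⟨by rw [hφ]; linarith, by rw [hφ]; linarith⟩)
  have hsin_half : 0 < sin (θ / 2) := sin_pos_of_pos_of_lt_pi (by linarith) (by linarith)
  nlinarith

end Sector

lemma hpolyC_succ_isRoot_iff {n : ℕ} {c r θ : ℝ} (hr : r ≠ 0) (hs : sin θ ≠ 0) :
    (hpolyC (n + 1) c).IsRoot (r * Complex.exp (θ * Complex.I)) ↔
      r ^ n * sin ((n + 1) * θ) = c * sin θ ∧
        r ^ (n + 1) * sin (n * θ) = (c - 1) * sin θ := by
  have hpow : ((r : ℂ) * Complex.exp (θ * Complex.I)) ^ (n + 1) =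
      (r ^ (n + 1) : ℝ) * Complex.exp (((n + 1) * θ : ℝ) * Complex.I) := by
    rw [mul_pow, ← Complex.exp_nat_mul]
    push_cast
    ring_nf
  have hsin : sin (n * θ) = sin ((n + 1) * θ) * cos θ - cos ((n + 1) * θ) * sin θ := by
    rw [← sin_sub]
    ring_nf
  simp only [IsRoot, hpolyC, eval_sub, eval_mul, eval_pow, eval_X, eval_C, hpow,
    Complex.ext_iff, Complex.sub_re, Complex.sub_im, Complex.mul_re, Complex.mul_im,
    Complex.ofReal_re, Complex.ofReal_im, Complex.exp_ofReal_mul_I_re,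
    Complex.exp_ofReal_mul_I_im, Complex.one_re, Complex.one_im, Complex.zero_re,
    Complex.zero_im]
  -- `cos θ * im - sin θ * re` is the second equation
  constructor
  · rintro ⟨hre, him⟩
    refine ⟨mul_left_cancel₀ hr ?_, ?_⟩
    · linear_combination him
    · linear_combination cos θ * him - sin θ * hre + r ^ (n + 1) * hsin
  · rintro ⟨h₁, h₂⟩
    refine ⟨mul_left_cancel₀ hs ?_, by linear_combination r * h₁⟩
    linear_combination cos θ * r * h₁ - h₂ + r ^ (n + 1) * hsin

/-- Logarithm of `sin ((n+1)θ) ^ (n+1) / ((-sin (nθ)) ^ n * sin θ)`, the quantity that the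
root condition pins to `c ^ (n+1) / (1-c) ^ n`. -/
def logPhase (n : ℕ) (θ : ℝ) : ℝ :=
  (n + 1) * log (sin ((n + 1) * θ)) - n * log (-sin (n * θ)) - log (sin θ)

section LogPhase

variable {n : ℕ} {x : ℝ}

lemma hasDerivAt_logPhase (hs : 0 < sin x) (hs₁ : 0 < sin ((n + 1) * x))
    (hsn : sin (n * x) < 0) :
    HasDerivAt (logPhase n)
      ((n + 1) ^ 2 * (cos ((n + 1) * x) / sin ((n + 1) * x)) - cos x / sin x
        - n ^ 2 * (cos (n * x) / sin (n * x))) x := by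
  have d₁ : HasDerivAt (fun θ : ℝ => sin ((n + 1) * θ)) (cos ((n + 1) * x) * (n + 1)) x := by
    simpa using ((hasDerivAt_id x).const_mul ((n : ℝ) + 1)).sin
  have d₂ : HasDerivAt (fun θ : ℝ => sin (n * θ)) (cos (n * x) * n) x := by
    simpa using ((hasDerivAt_id x).const_mul (n : ℝ)).sin
  refine HasDerivAt.congr_deriv (f := logPhase n)
    ((((d₁.log hs₁.ne').const_mul ((n : ℝ) + 1)).sub
      ((d₂.neg.log (neg_ne_zero.2 hsn.ne)).const_mul (n : ℝ))).sub
        ((hasDerivAt_sin x).log hs.ne')) ?_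
  have := hsn.ne
  simp only [Pi.neg_apply]
  field_simp
  ring

/-- The derivative of `logPhase` is a sum of two squares divided by
`sin ((n+1)x) * (-sin (nx)) * sin x`. -/
lemma logPhase_deriv_pos (hs : 0 < sin x) (hs₁ : 0 < sin ((n + 1) * x))
    (hsn : sin (n * x) < 0) :
    0 < (n + 1) ^ 2 * (cos ((n + 1) * x) / sin ((n + 1) * x)) - cos x / sin x
        - n ^ 2 * (cos (n * x) / sin (n * x)) := by
  have hsx : sin x = sin ((n + 1) * x) * cos (n * x) - cos ((n + 1) * x) * sin (n * x) := by
    rw [← sin_sub]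
    ring_nf
  have hcx : cos x = cos ((n + 1) * x) * cos (n * x) + sin ((n + 1) * x) * sin (n * x) := by
    rw [← cos_sub]
    ring_nf
  have hden : 0 < sin ((n + 1) * x) * -sin (n * x) * sin x := by
    have := neg_pos.2 hsn
    positivity
  refine pos_of_mul_pos_left ?_ hden.le
  have key : ((n + 1) ^ 2 * (cos ((n + 1) * x) / sin ((n + 1) * x)) - cos x / sin x
        - n ^ 2 * (cos (n * x) / sin (n * x))) * (sin ((n + 1) * x) * -sin (n * x) * sin x) =
      ((n + 1) * cos ((n + 1) * x) * -sin (n * x) + n * sin ((n + 1) * x) * cos (n * x)) ^ 2 +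
        (sin ((n + 1) * x) * sin (n * x)) ^ 2 := by
    have := hsn.ne
    have := hs.ne'
    have := hs₁.ne'
    field_simp
    rw [hsx, hcx]
    ring
  rw [key]
  have := mul_ne_zero hs₁.ne' hsn.ne
  positivity

lemma strictMonoOn_logPhase (hn : 2 ≤ n) :
    StrictMonoOn (logPhase n) (sector n) := by
  have hderiv : ∀ x ∈ sector n, HasDerivAt (logPhase n) _ x :=
    fun x hx => hasDerivAt_logPhase (sin_pos_of_mem_sector hn hx)
      (sin_succ_mul_pos_of_mem_sector hn hx) (sin_mul_neg_of_mem_sector hn hx)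
  refine strictMonoOn_of_deriv_pos (convex_Ioo _ _)
    (fun x hx => (hderiv x hx).continuousAt.continuousWithinAt) fun x hx => ?_
  rw [interior_Ioo] at hx
  rw [(hderiv x hx).deriv]
  exact logPhase_deriv_pos (sin_pos_of_mem_sector hn hx) (sin_succ_mul_pos_of_mem_sector hn hx)
    (sin_mul_neg_of_mem_sector hn hx)

end LogPhase

section PhaseEquation

variable {n : ℕ} {c r θ : ℝ}

lemma phase_eq_of_polar_eqs (hr : r ≠ 0) (hs : sin θ ≠ 0)
    (h₁ : r ^ n * sin ((n + 1) * θ) = c * sin θ)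
    (h₂ : r ^ (n + 1) * sin (n * θ) = (c - 1) * sin θ) :
    sin ((n + 1) * θ) ^ (n + 1) * (1 - c) ^ n = c ^ (n + 1) * (-sin (n * θ)) ^ n * sin θ := by
  have h₂' : r ^ (n + 1) * -sin (n * θ) = (1 - c) * sin θ := by linarith
  refine mul_left_cancel₀ (mul_ne_zero (pow_ne_zero (n * (n + 1)) hr) (pow_ne_zero n hs)) ?_
  calc r ^ (n * (n + 1)) * sin θ ^ n * (sin ((n + 1) * θ) ^ (n + 1) * (1 - c) ^ n)
      = (r ^ n * sin ((n + 1) * θ)) ^ (n + 1) * ((1 - c) * sin θ) ^ n := by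
        rw [mul_pow, mul_pow, ← pow_mul]; ring
    _ = (c * sin θ) ^ (n + 1) * (r ^ (n + 1) * -sin (n * θ)) ^ n := by rw [h₁, h₂']
    _ = _ := by rw [mul_pow, mul_pow, ← pow_mul]; ring

lemma logPhase_eq_of_phase_eq (hc : c ∈ Ioo 0 1) (hs : 0 < sin θ)
    (hs₁ : 0 < sin ((n + 1) * θ)) (hsn : sin (n * θ) < 0)
    (h : sin ((n + 1) * θ) ^ (n + 1) * (1 - c) ^ n = c ^ (n + 1) * (-sin (n * θ)) ^ n * sin θ) :
    logPhase n θ = (n + 1) * log c - n * log (1 - c) := by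
  have hlog := congrArg log h
  rw [log_mul (pow_pos hs₁ _).ne' (pow_pos (sub_pos.2 hc.2) _).ne',
    log_mul (mul_pos (pow_pos hc.1 _) (pow_pos (neg_pos.2 hsn) _)).ne' hs.ne',
    log_mul (pow_pos hc.1 _).ne' (pow_pos (neg_pos.2 hsn) _).ne'] at hlog
  simp only [log_pow] at hlog
  push_cast at hlog
  unfold logPhase
  linarith

lemma exists_polar_eqs_of_phase_eq (hn : n ≠ 0) (hc : c ∈ Ioo 0 1) (hs : 0 < sin θ)
    (hs₁ : 0 < sin ((n + 1) * θ)) (hsn : sin (n * θ) < 0)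
    (h : sin ((n + 1) * θ) ^ (n + 1) * (1 - c) ^ n = c ^ (n + 1) * (-sin (n * θ)) ^ n * sin θ) :
    ∃ r > 0, r ^ n * sin ((n + 1) * θ) = c * sin θ ∧
      r ^ (n + 1) * sin (n * θ) = (c - 1) * sin θ := by
  obtain ⟨hc₀, hc₁⟩ := hc
  have hsn' := neg_pos.2 hsn
  set q := c * sin θ / sin ((n + 1) * θ)
  have hq : 0 < q := by positivity
  set r := q ^ (n⁻¹ : ℝ)
  have hr : r ^ n = q := rpow_inv_natCast_pow hq.le hn
  have hpos : 0 < r := by positivity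
  refine ⟨r, hpos, by rw [hr, div_mul_cancel₀ _ hs₁.ne'], ?_⟩
  suffices r ^ (n + 1) * -sin (n * θ) = (1 - c) * sin θ by linarith
  refine (pow_left_inj₀ (by positivity) (by nlinarith) hn).1 ?_
  calc (r ^ (n + 1) * -sin (n * θ)) ^ n = q ^ (n + 1) * (-sin (n * θ)) ^ n := by
        rw [← hr]; ring
    _ = sin θ ^ n * (c ^ (n + 1) * (-sin (n * θ)) ^ n * sin θ) /
          sin ((n + 1) * θ) ^ (n + 1) := by
        rw [div_pow]; ring
    _ = ((1 - c) * sin θ) ^ n := by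
        rw [← h, mul_pow]
        field_simp

end PhaseEquation

section PolarSolutions

variable {n : ℕ} {c : ℝ}

lemma eq_of_polar_eqs (hn : 2 ≤ n) (hc : c ∈ Ioo 0 1) {r r' θ θ' : ℝ} (hr : 0 < r)
    (hr' : 0 < r') (hθ : θ ∈ sector n) (hθ' : θ' ∈ sector n)
    (h₁ : r ^ n * sin ((n + 1) * θ) = c * sin θ)
    (h₂ : r ^ (n + 1) * sin (n * θ) = (c - 1) * sin θ)
    (h₁' : r' ^ n * sin ((n + 1) * θ') = c * sin θ')
    (h₂' : r' ^ (n + 1) * sin (n * θ') = (c - 1) * sin θ') :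
    r = r' ∧ θ = θ' := by
  have hlog : ∀ {r θ : ℝ}, 0 < r → θ ∈ sector n →
      r ^ n * sin ((n + 1) * θ) = c * sin θ → r ^ (n + 1) * sin (n * θ) = (c - 1) * sin θ →
      logPhase n θ = (n + 1) * log c - n * log (1 - c) := fun hr hθ h₁ h₂ =>
    logPhase_eq_of_phase_eq hc (sin_pos_of_mem_sector hn hθ)
      (sin_succ_mul_pos_of_mem_sector hn hθ) (sin_mul_neg_of_mem_sector hn hθ)
      (phase_eq_of_polar_eqs hr.ne' (sin_pos_of_mem_sector hn hθ).ne' h₁ h₂)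
  obtain rfl : θ = θ' :=
    (strictMonoOn_logPhase hn).injOn hθ hθ'
      ((hlog hr hθ h₁ h₂).trans (hlog hr' hθ' h₁' h₂').symm)
  refine ⟨(pow_left_inj₀ hr.le hr'.le (by omega : n ≠ 0)).1 ?_, rfl⟩
  exact mul_right_cancel₀ (sin_succ_mul_pos_of_mem_sector hn hθ).ne' (h₁.trans h₁'.symm)

lemma exists_phase_eq_of_three_le (hn : 3 ≤ n) (hc : c ∈ Ioo 0 1) :
    ∃ θ ∈ sector n,
      sin ((n + 1) * θ) ^ (n + 1) * (1 - c) ^ n = c ^ (n + 1) * (-sin (n * θ)) ^ n * sin θ := by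
  have hn' : (3 : ℝ) ≤ n := by exact_mod_cast hn
  set a := 2 * π / (n + 1)
  set b := 2 * π / n
  have hab : a ≤ b := div_le_div_of_nonneg_left (by positivity) (by positivity) (by linarith)
  have hsa : 0 < sin a := sin_pos_of_pos_of_lt_pi (by positivity)
    (by rw [div_lt_iff₀ (by positivity)]; nlinarith [pi_pos])
  have hsb : 0 < sin b := sin_pos_of_pos_of_lt_pi (by positivity)
    (by rw [div_lt_iff₀ (by positivity)]; nlinarith [pi_pos])
  have ha : (n + 1) * a = 2 * π := mul_div_cancel₀ _ (by positivity)
  have hb : n * b = 2 * π := mul_div_cancel₀ _ (by positivity)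
  have ha₁ : sin ((n + 1) * a) = 0 := by rw [ha, sin_two_pi]
  have ha₂ : sin (n * a) = -sin a := by rw [show n * a = 2 * π - a by linarith, sin_two_pi_sub]
  have hb₁ : sin ((n + 1) * b) = sin b := by
    rw [show (n + 1) * b = b + 2 * π by linarith, sin_add_two_pi]
  have hb₂ : sin (n * b) = 0 := by rw [hb, sin_two_pi]
  let f : ℝ → ℝ := fun θ =>
    sin ((n + 1) * θ) ^ (n + 1) * (1 - c) ^ n - c ^ (n + 1) * (-sin (n * θ)) ^ n * sin θ
  have hfa : f a < 0 := by
    simp only [f, ha₁, ha₂, neg_neg, zero_pow (Nat.succ_ne_zero n), zero_mul, zero_sub,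
      neg_lt_zero]
    exact mul_pos (mul_pos (pow_pos hc.1 _) (pow_pos hsa _)) hsa
  have hfb : 0 < f b := by
    simp only [f, hb₁, hb₂, neg_zero, zero_pow (by omega : n ≠ 0), mul_zero, zero_mul,
      sub_zero]
    exact mul_pos (pow_pos hsb _) (pow_pos (sub_pos.2 hc.2) _)
  obtain ⟨θ, hθ, hfθ⟩ := intermediate_value_Ioo hab (by fun_prop) ⟨hfa, hfb⟩
  exact ⟨θ, hθ, sub_eq_zero.1 hfθ⟩

/-- For `n = 2` the phase equation is divided by `sin θ ^ 3`, which vanishes at `θ = π`. -/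
lemma exists_phase_eq_two (hc : c ∈ Ioo 0 1) (hc₃ : c < 3 / 4) :
    ∃ θ ∈ Ioo (2 * π / 3) π,
      sin (3 * θ) ^ 3 * (1 - c) ^ 2 = c ^ 3 * (-sin (2 * θ)) ^ 2 * sin θ := by
  let f : ℝ → ℝ := fun θ => (1 - c) ^ 2 * (3 - 4 * sin θ ^ 2) ^ 3 - 4 * c ^ 3 * cos θ ^ 2
  have hcos : cos (2 * π / 3) = -(1 / 2) := by
    rw [show 2 * π / 3 = π - π / 3 by ring, cos_pi_sub, cos_pi_div_three]
  have hfa : f (2 * π / 3) < 0 := by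
    simp only [f, sin_sq, hcos]
    nlinarith [pow_pos hc.1 3]
  have hfπ : 0 < f π := by
    simp only [f, sin_pi, cos_pi]
    -- `27 (1 - c)^2 - 4 c^3 = (3 - 4c) (3 - c)^2`
    nlinarith [mul_pos (sub_pos.2 hc₃) (pow_pos (by linarith [hc.2] : (0 : ℝ) < 3 - c) 2)]
  obtain ⟨θ, hθ, hfθ⟩ :=
    intermediate_value_Ioo (by linarith [pi_pos]) (by fun_prop) ⟨hfa, hfπ⟩
  refine ⟨θ, hθ, ?_⟩
  rw [sin_three_mul, sin_two_mul]
  linear_combination sin θ ^ 3 * hfθ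

lemma exists_phase_eq (hn : 2 ≤ n) (hc : c ∈ Ioo 0 1) (hc₃ : n = 2 → c < 3 / 4) :
    ∃ θ ∈ sector n,
      sin ((n + 1) * θ) ^ (n + 1) * (1 - c) ^ n = c ^ (n + 1) * (-sin (n * θ)) ^ n * sin θ := by
  rcases hn.eq_or_lt with rfl | hn
  · norm_num [sector]
    simpa using exists_phase_eq_two hc (hc₃ rfl)
  · exact exists_phase_eq_of_three_le hn hc

lemma exists_polar_eqs (hn : 2 ≤ n) (hc : c ∈ Ioo 0 1) (hc₃ : n = 2 → c < 3 / 4) :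
    ∃ r θ : ℝ, 0 < r ∧ θ ∈ sector n ∧ r ^ n * sin ((n + 1) * θ) = c * sin θ ∧
      r ^ (n + 1) * sin (n * θ) = (c - 1) * sin θ := by
  obtain ⟨θ, hθ, hphase⟩ := exists_phase_eq hn hc hc₃
  obtain ⟨r, hr, h₁, h₂⟩ := exists_polar_eqs_of_phase_eq (by omega) hc
    (sin_pos_of_mem_sector hn hθ) (sin_succ_mul_pos_of_mem_sector hn hθ)
    (sin_mul_neg_of_mem_sector hn hθ) hphase
  exact ⟨r, θ, hr, hθ, h₁, h₂⟩

end PolarSolutions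

lemma gpoly_succ (n : ℕ) (θ t : ℝ) :
    gpoly (n + 1) θ t =
      sin (n * θ) / sin θ * t ^ (n + 1) - sin ((n + 1) * θ) / sin θ * t ^ n + 1 := by
  simp [gpoly]

section GPoly

variable {n : ℕ} {θ : ℝ}

lemma strictAntiOn_gpoly (hn : 2 ≤ n) (hθ : θ ∈ sector n) :
    StrictAntiOn (gpoly (n + 1) θ) (Ici 0) := by
  have hA : sin (n * θ) / sin θ < 0 :=
    div_neg_of_neg_of_pos (sin_mul_neg_of_mem_sector hn hθ) (sin_pos_of_mem_sector hn hθ)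
  have hB : 0 < sin ((n + 1) * θ) / sin θ :=
    div_pos (sin_succ_mul_pos_of_mem_sector hn hθ) (sin_pos_of_mem_sector hn hθ)
  intro s (hs : 0 ≤ s) t (ht : 0 ≤ t) hst
  have h₁ : s ^ (n + 1) < t ^ (n + 1) := pow_lt_pow_left₀ hst hs (by omega)
  have h₂ : s ^ n ≤ t ^ n := pow_le_pow_left₀ hs hst.le n
  rw [gpoly_succ, gpoly_succ]
  nlinarith

lemma gpoly_one_neg (hn : 2 ≤ n) (hθ : θ ∈ sector n) :
    gpoly (n + 1) θ 1 < 0 := by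
  have hs := sin_pos_of_mem_sector hn hθ
  have key : gpoly (n + 1) θ 1 = (sin θ + sin (n * θ) - sin ((n + 1) * θ)) / sin θ := by
    rw [gpoly_succ]
    field_simp
    ring
  rw [key]
  exact div_neg_of_neg_of_pos (by linarith [sin_add_sin_mul_lt_sin_succ_mul hn hθ]) hs

lemma gpoly_eq_zero_of_polar_eqs {c r : ℝ} (hs : sin θ ≠ 0)
    (h₁ : r ^ n * sin ((n + 1) * θ) = c * sin θ)
    (h₂ : r ^ (n + 1) * sin (n * θ) = (c - 1) * sin θ) :
    gpoly (n + 1) θ r = 0 := by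
  have hA : sin (n * θ) / sin θ * r ^ (n + 1) = c - 1 := by
    rw [div_mul_eq_mul_div, mul_comm, h₂, mul_div_cancel_right₀ _ hs]
  have hB : sin ((n + 1) * θ) / sin θ * r ^ n = c := by
    rw [div_mul_eq_mul_div, mul_comm, h₁, mul_div_cancel_right₀ _ hs]
  rw [gpoly_succ, hA, hB]
  ring

end GPoly

/-- Let `m ≥ 3`, `c ∈ (0,1)` (with `c < 3/4` in case `m = 3`).  Then
`h(t) = t^m - c·t - (1-c)` has exactly one complex root of the form `r·e^{iθ}` with `r > 0`
and `θ ∈ (2π/m, 2π/(m-1))`; moreover for this root, `r` is the unique positive real root of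
`g_θ` and `r < 1`. -/
theorem stmt_10 (m : ℕ) (hm : 3 ≤ m) (c : ℝ) (hc : c ∈ Set.Ioo (0 : ℝ) 1)
    (hc3 : m = 3 → c < 3 / 4) :
    (∃! p : ℝ × ℝ, 0 < p.1 ∧ p.2 ∈ Set.Ioo (2 * π / (m : ℝ)) (2 * π / ((m : ℝ) - 1)) ∧
      (hpolyC m c).IsRoot ((p.1 : ℂ) * Complex.exp ((p.2 : ℂ) * Complex.I))) ∧
    (∀ r θ : ℝ, 0 < r → θ ∈ Set.Ioo (2 * π / (m : ℝ)) (2 * π / ((m : ℝ) - 1)) →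
      (hpolyC m c).IsRoot ((r : ℂ) * Complex.exp ((θ : ℂ) * Complex.I)) →
      gpoly m θ r = 0 ∧ r < 1 ∧ ∀ s : ℝ, 0 < s → gpoly m θ s = 0 → s = r) := by
  obtain ⟨n, rfl⟩ : ∃ n, m = n + 1 := ⟨m - 1, by omega⟩
  have hn : 2 ≤ n := by omega
  have hI : Ioo (2 * π / ((n + 1 : ℕ) : ℝ)) (2 * π / (((n + 1 : ℕ) : ℝ) - 1)) =
      sector n := by
    rw [sector]
    push_cast
    ring_nf
  rw [hI]
  have hroot {r θ : ℝ} (hr : 0 < r) (hθ : θ ∈ sector n) :=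
    hpolyC_succ_isRoot_iff (n := n) (c := c) hr.ne' (sin_pos_of_mem_sector hn hθ).ne'
  refine ⟨?_, fun r θ hr hθ h => ?_⟩
  · obtain ⟨r, θ, hr, hθ, h₁, h₂⟩ := exists_polar_eqs hn hc fun h => hc3 (by omega)
    refine ⟨(r, θ), ⟨hr, hθ, (hroot hr hθ).2 ⟨h₁, h₂⟩⟩, ?_⟩
    rintro ⟨r', θ'⟩ ⟨hr', hθ', h'⟩
    obtain ⟨h₁', h₂'⟩ := (hroot hr' hθ').1 h'
    obtain ⟨rfl, rfl⟩ := eq_of_polar_eqs hn hc hr' hr hθ' hθ h₁' h₂' h₁ h₂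
    rfl
  · obtain ⟨h₁, h₂⟩ := (hroot hr hθ).1 h
    have hanti := strictAntiOn_gpoly hn hθ
    have hr₀ := gpoly_eq_zero_of_polar_eqs (sin_pos_of_mem_sector hn hθ).ne' h₁ h₂
    refine ⟨hr₀, lt_of_not_ge fun hr₁ => ?_, fun s hs hs₀ =>
      hanti.injOn hs.le hr.le (hs₀.trans hr₀.symm)⟩
    have := hanti.antitoneOn (mem_Ici.2 zero_le_one) (mem_Ici.2 hr.le) hr₁
    linarith [gpoly_one_neg hn hθ]

end
end

section
/- Let R be a commutative ring, let n ≥ 2 be an integer, let t_1, …, t_n ∈ R, and let p ≥ n−1 be an integer. Let F be the n×n matrix over R whose i-th row is (1, t_i, t_i², …, t_i^{n−2}, t_i^p). Then det F = h_{p+1−n}(t_1, …, t_n) · ∏_{1 ≤ i < j ≤ n} (t_j − t_i). -/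
/-! The sequence `D e = det (vandermonde t with last column replaced by (t i ^ e))` satisfies
the linear recurrence with characteristic polynomial `q = ∏ i, (X - t i)`: every column
`e ↦ t i ^ e` does, and the determinant is linear in the last column. So does
`V * [X ^ e] (X ^ (n - 1) / ∏ i, (1 - t i X))` with `V` the Vandermonde determinant, because
`∏ i, (1 - t i X)` is the reversal of `q`. The two sequences agree for `e < n`
(two equal columns for `e < n - 1`, the Vandermonde matrix itself for `e = n - 1`), hence
everywhere, and `[X ^ p] (X ^ (n - 1) / ∏ i, (1 - t i X)) = h_{p+1-n}(t)`. -/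

noncomputable section

/-- The `k`-th complete homogeneous symmetric polynomial evaluated at `t_1, …, t_n`:
the sum of all monomials of total degree `k`, each appearing exactly once. -/
def hsym {R : Type*} [CommRing R] {n : ℕ} (t : Fin n → R) (k : ℕ) : R :=
  ∑ d ∈ Finset.Nat.antidiagonalTuple n k, ∏ i, t i ^ d i

open Finset Polynomial

section

variable {R : Type*} [CommRing R]

namespace PowerSeries

theorem coeff_prod_fin {n : ℕ} (f : Fin n → PowerSeries R) (k : ℕ) :
    coeff k (∏ i, f i) = ∑ d ∈ Nat.antidiagonalTuple n k, ∏ i, coeff (d i) (f i) := by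
  classical
  rw [coeff_prod, finsuppAntidiag, sum_map, ← piAntidiag_univ_fin_eq_antidiagonalTuple,
    ← sum_attach (piAntidiag univ k)]
  rfl

theorem coeff_prod_mk_pow {n : ℕ} (t : Fin n → R) (k : ℕ) :
    coeff k (∏ i, mk (t i ^ ·)) = hsym t k := by
  simp only [coeff_prod_fin, coeff_mk, hsym]

theorem one_sub_C_mul_X_mul_mk_pow (a : R) : (1 - C a * X) * mk (a ^ ·) = 1 := by
  have := congrArg (rescale a) (mk_one_mul_one_sub_eq_one R)
  rw [map_mul, map_sub, map_one, rescale_X, rescale_mk, mul_comm] at this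
  simpa only [Pi.one_apply, mul_one] using this

theorem coe_prod_one_sub_C_mul_X_mul_prod_mk_pow {ι : Type*} (s : Finset ι) (r : ι → R) :
    ((∏ i ∈ s, (1 - Polynomial.C (r i) * Polynomial.X) : R[X]) : PowerSeries R)
      * ∏ i ∈ s, mk (r i ^ ·) = 1 := by
  rw [← coeToPowerSeries.ringHom_apply, map_prod, ← prod_mul_distrib]
  exact prod_eq_one fun i _ => by simpa using one_sub_C_mul_X_mul_mk_pow (r i)

end PowerSeries

namespace Polynomial

theorem natDegree_prod_X_sub_C_le {ι : Type*} (s : Finset ι) (r : ι → R) :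
    (∏ i ∈ s, (X - C (r i))).natDegree ≤ #s :=
  le_trans (natDegree_prod_le s _) <| by
    simpa using sum_le_card_nsmul s _ 1 fun i _ => natDegree_X_sub_C_le (r i)

theorem coeff_card_prod_X_sub_C {ι : Type*} (s : Finset ι) (r : ι → R) :
    (∏ i ∈ s, (X - C (r i))).coeff #s = 1 := by
  simpa using coeff_prod_of_natDegree_le (s := s) _ 1 fun i _ => natDegree_X_sub_C_le (r i)

theorem reflect_prod_X_sub_C {ι : Type*} (s : Finset ι) (r : ι → R) :
    reflect #s (∏ i ∈ s, (X - C (r i))) = ∏ i ∈ s, (1 - C (r i) * X) := by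
  classical
  induction s using Finset.induction with
  | empty => simp
  | insert a s ha ih =>
    rw [prod_insert ha, prod_insert ha, card_insert_of_notMem ha, add_comm,
      reflect_mul _ _ (natDegree_X_sub_C_le _) (natDegree_prod_X_sub_C_le s r), ih,
      reflect_sub, reflect_C, reflect_one_X]
    ring

theorem coeff_add_coe_reflect_mul {q : R[X]} {N : ℕ} (hN : q.natDegree ≤ N) (F : PowerSeries R)
    (e : ℕ) :
    PowerSeries.coeff (e + N) ((reflect N q : PowerSeries R) * F)
      = ∑ k ∈ range (N + 1), q.coeff k * PowerSeries.coeff (e + k) F := by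
  rw [PowerSeries.coeff_mul, Nat.sum_antidiagonal_eq_sum_range_succ_mk,
    ← sum_range_reflect _ (N + 1),
    ← sum_subset (range_subset_range.2 (show N + 1 ≤ e + N + 1 by omega))]
  · refine sum_congr rfl fun k hk => ?_
    rw [mem_range] at hk
    rw [coeff_coe, coeff_reflect, revAt_le (by omega)]
    rw [show N + 1 - 1 - k = N - k by omega, show e + (N - k) = e + N - k by omega]
  · intro k hk hkN
    rw [mem_range] at hk hkN
    rw [coeff_coe, coeff_reflect, revAt_eq_self_of_lt (by omega),
      coeff_eq_zero_of_natDegree_lt (by omega), zero_mul]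

end Polynomial

namespace LinearRecurrence

/-- For `q` monic of degree `N`, the linear recurrence with characteristic polynomial `q`. -/
def ofPoly (q : R[X]) (N : ℕ) : LinearRecurrence R := ⟨N, fun k => -q.coeff k⟩

variable {q : R[X]} {N : ℕ}

theorem isSolution_ofPoly_iff (hq : q.coeff N = 1) (u : ℕ → R) :
    (ofPoly q N).IsSolution u ↔ ∀ e, ∑ k ∈ range (N + 1), q.coeff k * u (e + k) = 0 := by
  refine forall_congr' fun e => ?_
  change u (e + N) = ∑ k : Fin N, -q.coeff k * u (e + k) ↔ _
  simp only [sum_range_succ, hq, one_mul, neg_mul, sum_neg_distrib,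
    Fin.sum_univ_eq_sum_range (fun k => q.coeff k * u (e + k))]
  constructor <;> intro h <;> linear_combination h

theorem isSolution_ofPoly_pow (hN : q.natDegree ≤ N) (hq : q.coeff N = 1) {x : R}
    (hx : q.IsRoot x) : (ofPoly q N).IsSolution (x ^ ·) := by
  rw [isSolution_ofPoly_iff hq]
  intro e
  simp_rw [pow_add, mul_left_comm _ (x ^ e), ← mul_sum]
  rw [← eval_eq_sum_range' (Nat.lt_succ_of_le hN), hx.eq_zero, mul_zero]

theorem isSolution_ofPoly_coeff (hN : q.natDegree ≤ N) (hq : q.coeff N = 1) (F : PowerSeries R)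
    (hF : ∀ e, PowerSeries.coeff (e + N) ((reflect N q : PowerSeries R) * F) = 0) :
    (ofPoly q N).IsSolution (PowerSeries.coeff · F) := by
  rw [isSolution_ofPoly_iff hq]
  intro e
  rw [← coeff_add_coe_reflect_mul hN, hF]

theorem isSolution_det_updateCol {m : Type*} [Fintype m] [DecidableEq m] (E : LinearRecurrence R)
    (A : Matrix m m R) (j : m) {u : ℕ → m → R} (hu : ∀ i, E.IsSolution (u · i)) :
    E.IsSolution fun e => (A.updateCol j (u e)).det := by
  let L : (m → R) →ₗ[R] R :=
    { toFun := fun v => (A.updateCol j v).det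
      map_add' := A.det_updateCol_add j
      map_smul' := A.det_updateCol_smul j }
  intro e
  have hcol : u (e + E.order) = ∑ k, E.coeffs k • u (e + k) := by
    ext i
    simpa using hu i e
  exact (congrArg L hcol).trans (by simp [L, map_sum])

theorem isSolution_ofPoly_prod_X_sub_C_pow {n : ℕ} (t : Fin n → R) (i : Fin n) :
    (ofPoly (∏ j, (X - C (t j))) n).IsSolution (t i ^ ·) := by
  refine isSolution_ofPoly_pow ?_ ?_ ?_
  · simpa using natDegree_prod_X_sub_C_le univ t
  · simpa using coeff_card_prod_X_sub_C univ t
  · simp [eval_prod, prod_eq_zero (mem_univ i)]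

theorem isSolution_ofPoly_prod_X_sub_C_coeff {n d : ℕ} (hd : d < n) (t : Fin n → R) :
    (ofPoly (∏ j, (X - C (t j))) n).IsSolution
      (PowerSeries.coeff · (PowerSeries.X ^ d * ∏ j, PowerSeries.mk (t j ^ ·))) := by
  refine isSolution_ofPoly_coeff ?_ ?_ _ fun e => ?_
  · simpa using natDegree_prod_X_sub_C_le univ t
  · simpa using coeff_card_prod_X_sub_C univ t
  have hP := reflect_prod_X_sub_C univ t
  rw [card_univ, Fintype.card_fin] at hP
  rw [hP, mul_left_comm, PowerSeries.coe_prod_one_sub_C_mul_X_mul_prod_mk_pow, mul_one,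
    PowerSeries.coeff_X_pow, if_neg (by omega)]

end LinearRecurrence

theorem Matrix.det_updateCol_vandermonde_last_pow {m : ℕ} (t : Fin (m + 1) → R) (e : ℕ) :
    ((vandermonde t).updateCol (Fin.last m) (fun i => t i ^ e)).det
      = (vandermonde t).det
        * PowerSeries.coeff e (PowerSeries.X ^ m * ∏ i, PowerSeries.mk (t i ^ ·)) := by
  set G : PowerSeries R := PowerSeries.X ^ m * ∏ i, PowerSeries.mk (t i ^ ·)
  set E := LinearRecurrence.ofPoly (∏ i, (X - C (t i))) (m + 1)
  have hD : E.IsSolution fun e => ((vandermonde t).updateCol (Fin.last m) (t · ^ e)).det :=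
    E.isSolution_det_updateCol _ _ (LinearRecurrence.isSolution_ofPoly_prod_X_sub_C_pow t)
  have hG : E.IsSolution fun e => (vandermonde t).det * PowerSeries.coeff e G :=
    E.solSpace.smul_mem (x := (PowerSeries.coeff · G)) _
      (LinearRecurrence.isSolution_ofPoly_prod_X_sub_C_coeff m.lt_succ_self t)
  refine congrFun ((E.eq_iff_eqOn_range_order _ _ hD hG).2 fun k hk => ?_) e
  rw [coe_range, Set.mem_Iio] at hk
  dsimp only
  obtain hk | rfl := Nat.lt_succ_iff_lt_or_eq.1 hk
  · have hG_zero : PowerSeries.coeff k G = 0 := by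
      rw [PowerSeries.coeff_X_pow_mul', if_neg (by omega)]
    rw [hG_zero, mul_zero]
    have hne : Fin.last m ≠ ⟨k, by omega⟩ := Fin.ne_of_val_ne (by rw [Fin.val_last]; exact hk.ne')
    refine det_zero_of_column_eq hne fun i => ?_
    rw [updateCol_self, updateCol_ne hne.symm]
    rfl
  · have hG_one : PowerSeries.coeff k G = 1 := by
      simp [G, PowerSeries.coeff_X_pow_mul']
    rw [hG_one, mul_one, show (t · ^ k) = fun i => vandermonde t i (Fin.last k) from rfl,
      updateCol_eq_self]

end

/-- Generalized Vandermonde determinant: if `F` is the `n×n` matrix whose `i`-th row is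
`(1, t_i, t_i², …, t_i^{n-2}, t_i^p)` with `p ≥ n-1`, then
`det F = h_{p+1-n}(t_1, …, t_n) · ∏_{i<j} (t_j - t_i)`. -/
theorem stmt_15 {R : Type*} [CommRing R] (n : ℕ) (hn : 2 ≤ n) (t : Fin n → R)
    (p : ℕ) (hp : n - 1 ≤ p) :
    (Matrix.of fun i j : Fin n => if (j : ℕ) = n - 1 then t i ^ p else t i ^ (j : ℕ)).det
      = hsym t (p + 1 - n) * ∏ i : Fin n, ∏ j ∈ Finset.Ioi i, (t j - t i) := by
  obtain ⟨m, rfl⟩ : ∃ m, n = m + 1 := ⟨n - 1, by omega⟩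
  have hF : (Matrix.of fun i j : Fin (m + 1) =>
      if (j : ℕ) = m + 1 - 1 then t i ^ p else t i ^ (j : ℕ))
        = (Matrix.vandermonde t).updateCol (Fin.last m) (t · ^ p) := by
    ext i j
    simp [Matrix.updateCol_apply, Fin.ext_iff]
  rw [hF, Matrix.det_updateCol_vandermonde_last_pow, Matrix.det_vandermonde,
    PowerSeries.coeff_X_pow_mul', if_pos (by omega), PowerSeries.coeff_prod_mk_pow,
    show p + 1 - (m + 1) = p - m by omega, mul_comm]
end
end
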